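/- arXiv:1401.7530 — 6 statements merged into one kernel-verified Lean document; each statement's English description precedes it below -/
import Mathlib

section
/- Let p be a prime, n ≥ 1, and a_1, …, a_n ∈ ℚ_p with |a_1|_p > 1 and |a_j|_p ≤ |a_1|_p for all 2 ≤ j ≤ n. Define the sequence (α_k) in ℚ_p by α_0 = a_1 and α_{k+1} = a_1 + a_2/α_k + a_3/α_k² + ⋯ + a_n/α_k^{n−1}. Then the sequence is well defined (α_k ≠ 0 for all k) and |α_k|_p = |a_1|_p for every k ≥ 0. -/
open Finset IsUltrametricDist

lemma norm_div_pow_le_one {K : Type*} [NormedDivisionRing K] {x y : K} {m : ℕ} (hm : 1 ≤ m)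
    (hx : 1 ≤ ‖x‖) (hy : ‖y‖ ≤ ‖x‖) : ‖y / x ^ m‖ ≤ 1 := by
  rw [norm_div, norm_pow]
  exact div_le_one_of_le₀ (hy.trans (le_self_pow₀ hx (by omega))) (by positivity)

lemma norm_sum_Icc_div_pow_eq {K : Type*} [NormedField K] [IsUltrametricDist K] {n : ℕ}
    (hn : 1 ≤ n) {a : ℕ → K} {x : K} (ha1 : 1 < ‖a 1‖) (hx : 1 ≤ ‖x‖)
    (ha : ∀ j, 2 ≤ j → j ≤ n → ‖a j‖ ≤ ‖x‖) :
    ‖∑ j ∈ Icc 1 n, a j / x ^ (j - 1)‖ = ‖a 1‖ := by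
  have htail : ‖∑ j ∈ Ioc 1 n, a j / x ^ (j - 1)‖ < ‖a 1‖ := by
    refine (norm_sum_le_of_forall_le_of_nonneg zero_le_one fun j hj => ?_).trans_lt ha1
    rw [mem_Ioc] at hj
    exact norm_div_pow_le_one (by omega) hx (ha j hj.1 hj.2)
  rw [← add_sum_Ioc_eq_sum_Icc hn, Nat.sub_self, pow_zero, div_one,
    norm_add_eq_max_of_norm_ne_norm htail.ne', max_eq_left htail.le]

/-- For `a_1, …, a_n ∈ ℚ_p` with `|a_1|_p > 1` and `|a_j|_p ≤ |a_1|_p` for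
`2 ≤ j ≤ n`, the sequence `α_0 = a_1`, `α_{k+1} = a_1 + a_2/α_k + ⋯ + a_n/α_k^(n−1)` is well
defined (`α_k ≠ 0`) and satisfies `|α_k|_p = |a_1|_p` for all `k`. -/
theorem padic_recurrence_norm_invariant (p : ℕ) [Fact p.Prime] (n : ℕ) (hn : 1 ≤ n)
    (a : ℕ → ℚ_[p]) (ha1 : 1 < ‖a 1‖)
    (haj : ∀ j, 2 ≤ j → j ≤ n → ‖a j‖ ≤ ‖a 1‖)
    (α : ℕ → ℚ_[p]) (h0 : α 0 = a 1)
    (hrec : ∀ k, α (k + 1) = ∑ j ∈ Finset.Icc 1 n, a j / α k ^ (j - 1)) :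
    ∀ k, α k ≠ 0 ∧ ‖α k‖ = ‖a 1‖ := by
  have hnorm : ∀ k, ‖α k‖ = ‖a 1‖ := by
    intro k
    induction k with
    | zero => rw [h0]
    | succ k ih =>
      rw [hrec, norm_sum_Icc_div_pow_eq hn ha1 (ih ▸ ha1.le)
        fun j hj hjn => (haj j hj hjn).trans ih.ge]
  exact fun k => ⟨norm_pos_iff.mp ((hnorm k).symm ▸ one_pos.trans ha1), hnorm k⟩
end

section
/- Let p be a prime, n ≥ 2, and a_1, …, a_n ∈ ℚ_p with |a_1|_p > 1 and |a_j|_p ≤ |a_1|_p for all 2 ≤ j ≤ n. Define α_0 = a_1 and α_{k+1} = a_1 + a_2/α_k + ⋯ + a_n/α_k^{n−1}. Then for every k ≥ 1 one has |α_{k+1} − α_k|_p ≤ C · |α_k − α_{k−1}|_p, where C = max_{2 ≤ j ≤ n} |a_j|_p / |a_1|_p^j, and moreover C < 1. -/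
/-!
All iterates lie on the sphere `‖x‖ = ‖a₁‖`: there the leading term `a₁` strictly dominates,
since `‖a_j / x^(j-1)‖ ≤ ‖a₁‖^(2-j) ≤ 1 < ‖a₁‖` for `j ≥ 2`, so the ultrametric norm of the sum is
`‖a₁‖`. On that sphere, factoring `x^m - y^m = (x - y) ∑ x^i y^(m-1-i)` and applying the ultrametric
inequality gives `‖x^m - y^m‖ ≤ ‖a₁‖^(m-1) ‖x - y‖`, so `x ↦ a_j / x^(j-1)` is Lipschitz with
constant `‖a_j‖ / ‖a₁‖^j`, and each of these constants is `< 1` because `‖a_j‖ ≤ ‖a₁‖ < ‖a₁‖^j`.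
-/

open Finset IsUltrametricDist

section

variable {K : Type*} [NormedField K]

def invPowerSum (a : ℕ → K) (n : ℕ) (x : K) : K := ∑ j ∈ Icc 1 n, a j / x ^ (j - 1)

lemma invPowerSum_eq_add {n : ℕ} (hn : 1 ≤ n) (a : ℕ → K) (x : K) :
    invPowerSum a n x = a 1 + ∑ j ∈ Icc 2 n, a j / x ^ (j - 1) := by
  rw [invPowerSum, ← insert_Icc_add_one_left_eq_Icc hn, sum_insert (by simp)]
  simp

variable [IsUltrametricDist K]

lemma norm_invPowerSum_eq {a : ℕ → K} {n : ℕ} (hn : 1 ≤ n) (ha1 : 1 < ‖a 1‖)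
    (haj : ∀ j ∈ Icc 2 n, ‖a j‖ ≤ ‖a 1‖) {x : K} (hx : ‖x‖ = ‖a 1‖) :
    ‖invPowerSum a n x‖ = ‖a 1‖ := by
  have htail : ‖∑ j ∈ Icc 2 n, a j / x ^ (j - 1)‖ ≤ 1 := by
    refine norm_sum_le_of_forall_le_of_nonneg zero_le_one fun j hj => ?_
    rw [norm_div, norm_pow, hx, div_le_one (by positivity)]
    calc ‖a j‖ ≤ ‖a 1‖ := haj j hj
      _ ≤ ‖a 1‖ ^ (j - 1) := le_self_pow₀ ha1.le (by grind)
  rw [invPowerSum_eq_add hn, norm_add_eq_max_of_norm_ne_norm (by linarith),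
    max_eq_left (by linarith)]

lemma norm_pow_succ_sub_pow_succ_le {x y : K} {r : ℝ} (hx : ‖x‖ ≤ r) (hy : ‖y‖ ≤ r) (m : ℕ) :
    ‖x ^ (m + 1) - y ^ (m + 1)‖ ≤ r ^ m * ‖x - y‖ := by
  have hr : 0 ≤ r := (norm_nonneg x).trans hx
  rw [← geom_sum₂_mul, norm_mul]
  gcongr
  refine norm_sum_le_of_forall_le_of_nonneg (by positivity) fun i hi => ?_
  calc ‖x ^ i * y ^ (m + 1 - 1 - i)‖ = ‖x‖ ^ i * ‖y‖ ^ (m - i) := by simp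
    _ ≤ r ^ i * r ^ (m - i) := by gcongr
    _ = r ^ m := by rw [← pow_add, Nat.add_sub_cancel' (by simpa [Nat.lt_succ_iff] using hi)]

lemma norm_div_pow_succ_sub_div_pow_succ_le (c : K) {x y : K} (hxy : ‖y‖ = ‖x‖) (m : ℕ) :
    ‖c / x ^ (m + 1) - c / y ^ (m + 1)‖ ≤ ‖c‖ / ‖x‖ ^ (m + 2) * ‖x - y‖ := by
  rcases eq_or_ne x 0 with rfl | hx
  · simp_all
  have hy : y ≠ 0 := norm_ne_zero_iff.mp (hxy ▸ norm_ne_zero_iff.mpr hx)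
  rw [div_sub_div _ _ (pow_ne_zero _ hx) (pow_ne_zero _ hy), ← mul_comm c, ← mul_sub, norm_div,
    norm_mul, norm_mul, norm_pow, norm_pow, hxy, norm_sub_rev x y]
  calc ‖c‖ * ‖y ^ (m + 1) - x ^ (m + 1)‖ / (‖x‖ ^ (m + 1) * ‖x‖ ^ (m + 1))
      ≤ ‖c‖ * (‖x‖ ^ m * ‖y - x‖) / (‖x‖ ^ (m + 1) * ‖x‖ ^ (m + 1)) := by
        gcongr
        exact norm_pow_succ_sub_pow_succ_le hxy.le le_rfl m
    _ = ‖c‖ / ‖x‖ ^ (m + 2) * ‖y - x‖ := by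
        field_simp
        ring

lemma norm_invPowerSum_sub_le {a : ℕ → K} {n : ℕ} (hn : 1 ≤ n) {r C : ℝ} (hC0 : 0 ≤ C)
    (hC : ∀ j ∈ Icc 2 n, ‖a j‖ / r ^ j ≤ C) {x y : K} (hx : ‖x‖ = r) (hy : ‖y‖ = r) :
    ‖invPowerSum a n x - invPowerSum a n y‖ ≤ C * ‖x - y‖ := by
  rw [invPowerSum_eq_add hn, invPowerSum_eq_add hn, add_sub_add_left_eq_sub, ← sum_sub_distrib]
  refine norm_sum_le_of_forall_le_of_nonneg (by positivity) fun j hj => ?_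
  obtain ⟨m, rfl⟩ : ∃ m, j = m + 2 := ⟨j - 2, by grind⟩
  calc ‖a (m + 2) / x ^ (m + 1) - a (m + 2) / y ^ (m + 1)‖
      ≤ ‖a (m + 2)‖ / r ^ (m + 2) * ‖x - y‖ :=
        hx ▸ norm_div_pow_succ_sub_div_pow_succ_le _ (hy.trans hx.symm) m
    _ ≤ C * ‖x - y‖ := by gcongr; exact hC _ hj

end

/-- With `α_0 = a_1`, `α_{k+1} = a_1 + a_2/α_k + ⋯ + a_n/α_k^(n−1)` as before
(`|a_1|_p > 1`, `|a_j|_p ≤ |a_1|_p` for `2 ≤ j ≤ n`, `n ≥ 2`), for every `k ≥ 1` one has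
`|α_{k+1} − α_k|_p ≤ C · |α_k − α_{k−1}|_p` where `C = max_{2 ≤ j ≤ n} |a_j|_p / |a_1|_p^j`,
and moreover `C < 1`. -/
theorem padic_recurrence_contraction (p : ℕ) [Fact p.Prime] (n : ℕ) (hn : 2 ≤ n)
    (a : ℕ → ℚ_[p]) (ha1 : 1 < ‖a 1‖)
    (haj : ∀ j, 2 ≤ j → j ≤ n → ‖a j‖ ≤ ‖a 1‖)
    (α : ℕ → ℚ_[p]) (h0 : α 0 = a 1)
    (hrec : ∀ k, α (k + 1) = ∑ j ∈ Finset.Icc 1 n, a j / α k ^ (j - 1))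
    (C : ℝ)
    (hC : C = (Finset.Icc 2 n).sup' (Finset.nonempty_Icc.2 hn)
      (fun j => ‖a j‖ / ‖a 1‖ ^ j)) :
    C < 1 ∧ ∀ k, 1 ≤ k → ‖α (k + 1) - α k‖ ≤ C * ‖α k - α (k - 1)‖ := by
  have hn1 : 1 ≤ n := by omega
  have haj' : ∀ j ∈ Icc 2 n, ‖a j‖ ≤ ‖a 1‖ := fun j hj => haj j (mem_Icc.1 hj).1 (mem_Icc.1 hj).2
  have hstep : ∀ k, α (k + 1) = invPowerSum a n (α k) := hrec
  have hnorm : ∀ k, ‖α k‖ = ‖a 1‖ := by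
    intro k
    induction k with
    | zero => rw [h0]
    | succ k ih => exact hstep k ▸ norm_invPowerSum_eq hn1 ha1 haj' ih
  have hCj : ∀ j ∈ Icc 2 n, ‖a j‖ / ‖a 1‖ ^ j ≤ C :=
    fun j hj => hC ▸ le_sup' (fun j => ‖a j‖ / ‖a 1‖ ^ j) hj
  have hC0 : 0 ≤ C := (by positivity : (0 : ℝ) ≤ ‖a 2‖ / ‖a 1‖ ^ 2).trans (hCj 2 (by simp [hn]))
  refine ⟨?_, fun k hk => ?_⟩
  · rw [hC, sup'_lt_iff]
    intro j hj
    rw [div_lt_one (by positivity)]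
    exact (haj' j hj).trans_lt (lt_self_pow₀ ha1 (by grind))
  · obtain ⟨k, rfl⟩ := Nat.exists_eq_add_of_le' hk
    simpa only [← hstep, Nat.add_sub_cancel] using
      norm_invPowerSum_sub_le hn1 hC0 hCj (hnorm (k + 1)) (hnorm k)
end

section
/- Let p be a prime, n ≥ 1, and a_1, …, a_n ∈ ℤ[1/p] with v_p(a_1) < 0 and v_p(a_1) ≤ v_p(a_j) for all 2 ≤ j ≤ n. Then the polynomial X^n − a_1X^{n−1} − ⋯ − a_n has a root β in ℚ_p with |β|_p = |a_1|_p > 1. (In particular, every Pisot–Chabauty or Salem–Chabauty number lies in ℚ_p.) -/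
/-!
Rescaling `β = a₁ z` turns the equation into `z ^ n = ∑ (a_j / a₁ ^ j) z ^ (n - j)`, whose
coefficients are `p`-adic integers: the first is `1` and the others lie in `pℤ_p`. Modulo `p` the
polynomial is `X ^ (n - 1) (X - 1)`, so Hensel's lemma lifts the simple root `1` to a unit `z`,
and then `|β|_p = |a₁|_p > 1`.
-/

open Polynomial Finset IsLocalRing

noncomputable def Polynomial.recurrencePoly {R : Type*} [CommRing R] (n : ℕ) (b : ℕ → R) : R[X] :=
  X ^ n - ∑ j ∈ Icc 1 n, C (b j) * X ^ (n - j)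

namespace Polynomial

section CommRing

variable {R : Type*} [CommRing R] {n : ℕ} {b : ℕ → R}

@[simp]
theorem eval_recurrencePoly (x : R) :
    (recurrencePoly n b).eval x = x ^ n - ∑ j ∈ Icc 1 n, b j * x ^ (n - j) := by
  simp [recurrencePoly, eval_finsetSum]

theorem recurrencePoly_monic : (recurrencePoly n b).Monic := by
  refine monic_X_pow_sub ((degree_sum_le _ _).trans_lt ?_)
  refine (Finset.sup_lt_iff (WithBot.bot_lt_coe n)).2 fun j hj => ?_
  have hj' := mem_Icc.1 hj
  exact (degree_C_mul_X_pow_le _ _).trans_lt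
    (WithBot.coe_lt_coe.2 (Nat.sub_lt (by omega) (by omega)))

theorem eval_one_recurrencePoly (hn : 1 ≤ n) (hb1 : b 1 = 1) :
    (recurrencePoly n b).eval 1 = -∑ j ∈ Icc 2 n, b j := by
  rw [eval_recurrencePoly, ← insert_Icc_add_one_left_eq_Icc hn, sum_insert (by simp), hb1]
  simp

theorem eval_one_derivative_recurrencePoly (hn : 1 ≤ n) (hb1 : b 1 = 1) :
    (derivative (recurrencePoly n b)).eval 1 = 1 - ∑ j ∈ Icc 2 n, b j * (n - j : ℕ) := by
  simp only [recurrencePoly, derivative_sub, derivative_X_pow, derivative_sum, derivative_C_mul,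
    eval_sub, eval_finsetSum, eval_mul, eval_C, eval_pow, eval_X, one_pow, mul_one]
  rw [← insert_Icc_add_one_left_eq_Icc hn, sum_insert (by simp), hb1, one_add_one_eq_two,
    Nat.cast_sub hn]
  ring

theorem exists_isRoot_recurrencePoly_sub_one_mem {I : Ideal R} [HenselianRing R I] (hn : 1 ≤ n)
    (hb1 : b 1 = 1) (hb : ∀ j ∈ Icc 2 n, b j ∈ I) :
    ∃ z, (recurrencePoly n b).IsRoot z ∧ z - 1 ∈ I := by
  have hsum : ∑ j ∈ Icc 2 n, b j * (n - j : ℕ) ∈ I :=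
    I.sum_mem fun j hj => I.mul_mem_right _ (hb j hj)
  refine HenselianRing.is_henselian _ recurrencePoly_monic 1 ?_ ?_
  · rw [eval_one_recurrencePoly hn hb1]
    exact I.neg_mem (I.sum_mem hb)
  · rw [eval_one_derivative_recurrencePoly hn hb1, map_sub, map_one,
      Ideal.Quotient.eq_zero_iff_mem.2 hsum, sub_zero]
    exact isUnit_one

end CommRing

theorem IsRoot.recurrencePoly_mul {K : Type*} [Field K] {n : ℕ} {a : ℕ → K} {q z : K}
    (hq : q ≠ 0) (h : (recurrencePoly n fun j => a j / q ^ j).IsRoot z) :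
    (recurrencePoly n a).IsRoot (q * z) := by
  have key : (recurrencePoly n a).eval (q * z) =
      q ^ n * (recurrencePoly n fun j => a j / q ^ j).eval z := by
    rw [eval_recurrencePoly, eval_recurrencePoly, mul_sub, mul_sum, mul_pow]
    refine congrArg _ (sum_congr rfl fun j hj => ?_)
    rw [← pow_mul_pow_sub q (mem_Icc.1 hj).2]
    field_simp
    ring
  rw [IsRoot, key, h.eq_zero, mul_zero]

end Polynomial

theorem norm_div_pow_lt_one {K : Type*} [NormedDivisionRing K] {x q : K} {j : ℕ} (hq : 1 < ‖q‖)
    (hj : 2 ≤ j) (hx : ‖x‖ ≤ ‖q‖) : ‖x / q ^ j‖ < 1 := by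
  rw [norm_div, norm_pow, div_lt_one (pow_pos (one_pos.trans hq) _)]
  calc ‖x‖ ≤ ‖q‖ := hx
    _ < ‖q‖ ^ 2 := lt_self_pow₀ hq (by norm_num)
    _ ≤ ‖q‖ ^ j := pow_le_pow_right₀ hq.le hj

namespace Padic

variable {p : ℕ} [Fact p.Prime]

theorem norm_ratCast_le_of_padicValRat_le {x y : ℚ} (hy : y ≠ 0)
    (h : padicValRat p y ≤ padicValRat p x) : ‖(x : ℚ_[p])‖ ≤ ‖(y : ℚ_[p])‖ := by
  rcases eq_or_ne x 0 with rfl | hx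
  · rw [Rat.cast_zero, norm_zero]
    exact norm_nonneg _
  rw [norm_eq_zpow_neg_valuation (by exact_mod_cast hx),
    norm_eq_zpow_neg_valuation (by exact_mod_cast hy), valuation_ratCast, valuation_ratCast]
  exact zpow_le_zpow_right₀ (by exact_mod_cast (Fact.out : p.Prime).one_le) (neg_le_neg h)

theorem one_lt_norm_ratCast_of_padicValRat_neg {x : ℚ} (h : padicValRat p x < 0) :
    1 < ‖(x : ℚ_[p])‖ := by
  have hx : x ≠ 0 := by rintro rfl; simp at h
  rw [norm_eq_zpow_neg_valuation (by exact_mod_cast hx), valuation_ratCast]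
  exact one_lt_zpow₀ (by exact_mod_cast (Fact.out : p.Prime).one_lt) (by omega)

theorem exists_isRoot_recurrencePoly_norm_eq_one {n : ℕ} (hn : 1 ≤ n) {c : ℕ → ℚ_[p]}
    (hc1 : c 1 = 1) (hc : ∀ j ∈ Icc 2 n, ‖c j‖ < 1) :
    ∃ z : ℚ_[p], ‖z‖ = 1 ∧ (recurrencePoly n c).IsRoot z := by
  have hc_le : ∀ j ∈ Icc 1 n, ‖c j‖ ≤ 1 := fun j hj => by
    rcases (mem_Icc.1 hj).1.eq_or_lt with rfl | hj2
    · simp [hc1]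
    · exact (hc j (mem_Icc.2 ⟨hj2, (mem_Icc.1 hj).2⟩)).le
  have hlift : ∀ j, ∃ b : ℤ_[p], j ∈ Icc 1 n → (b : ℚ_[p]) = c j := fun j =>
    if hj : j ∈ Icc 1 n then ⟨⟨c j, hc_le j hj⟩, fun _ => rfl⟩ else ⟨0, fun h => absurd h hj⟩
  choose b hb using hlift
  have hb1 : b 1 = 1 := PadicInt.ext ((hb 1 (by simpa using hn)).trans hc1)
  have hbI : ∀ j ∈ Icc 2 n, b j ∈ maximalIdeal ℤ_[p] := fun j hj => by
    rw [mem_maximalIdeal, PadicInt.mem_nonunits, ← PadicInt.padic_norm_e_of_padicInt,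
      hb j (Icc_subset_Icc_left one_le_two hj)]
    exact hc j hj
  obtain ⟨z, hz, hz1⟩ := exists_isRoot_recurrencePoly_sub_one_mem hn hb1 hbI
  have hunit : IsUnit z := by
    simpa using isUnit_one_sub_self_of_mem_nonunits _ ((maximalIdeal ℤ_[p]).neg_mem hz1)
  refine ⟨z, by rw [PadicInt.padic_norm_e_of_padicInt, ← PadicInt.isUnit_iff]; exact hunit, ?_⟩
  have hzroot := congrArg ((↑) : ℤ_[p] → ℚ_[p]) hz.eq_zero
  rw [eval_recurrencePoly, PadicInt.coe_sub, PadicInt.coe_sum] at hzroot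
  push_cast at hzroot
  rw [IsRoot, eval_recurrencePoly, ← hzroot]
  exact congrArg _ (sum_congr rfl fun j hj => by rw [hb j hj])

end Padic

theorem padic_root_exists_general (p : ℕ) [Fact p.Prime] (n : ℕ) (hn : 1 ≤ n)
    (a : ℕ → ℚ)
    (ha1 : padicValRat p (a 1) < 0)
    (haj : ∀ j, 2 ≤ j → j ≤ n → padicValRat p (a 1) ≤ padicValRat p (a j)) :
    ∃ β : ℚ_[p], β ^ n = ∑ j ∈ Finset.Icc 1 n, ((a j : ℚ) : ℚ_[p]) * β ^ (n - j) ∧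
      ‖β‖ = ‖((a 1 : ℚ) : ℚ_[p])‖ ∧ 1 < ‖β‖ := by
  set q : ℚ_[p] := ((a 1 : ℚ) : ℚ_[p])
  have hq : 1 < ‖q‖ := Padic.one_lt_norm_ratCast_of_padicValRat_neg ha1
  have hq0 : q ≠ 0 := norm_pos_iff.1 (one_pos.trans hq)
  have ha10 : a 1 ≠ 0 := by intro h; simp [h] at ha1
  obtain ⟨z, hz, hroot⟩ := Padic.exists_isRoot_recurrencePoly_norm_eq_one (p := p)
    (c := fun j => (a j : ℚ_[p]) / q ^ j) hn (by simp [q, div_self hq0]) fun j hj =>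
      norm_div_pow_lt_one hq (mem_Icc.1 hj).1
        (Padic.norm_ratCast_le_of_padicValRat_le ha10 (haj j (mem_Icc.1 hj).1 (mem_Icc.1 hj).2))
  have hβ := hroot.recurrencePoly_mul hq0
  rw [IsRoot, eval_recurrencePoly, sub_eq_zero] at hβ
  refine ⟨q * z, hβ, ?_, ?_⟩ <;> rw [norm_mul, hz, mul_one]
  exact hq

/-- Let `a_1, …, a_n ∈ ℤ[1/p]` with `v_p(a_1) < 0` and
`v_p(a_1) ≤ v_p(a_j)` for `2 ≤ j ≤ n`.  Then `X^n − a_1 X^(n−1) − ⋯ − a_n` has a root `β ∈ ℚ_p`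
with `|β|_p = |a_1|_p > 1`.  (In particular every Pisot–Chabauty or Salem–Chabauty number lies
in `ℚ_p`.) -/
theorem padic_root_exists (p : ℕ) [Fact p.Prime] (n : ℕ) (hn : 1 ≤ n)
    (a : ℕ → ℚ)
    (haZ : ∀ j, 1 ≤ j → j ≤ n → ∃ m : ℤ, ∃ k : ℕ, a j = (m : ℚ) / (p : ℚ) ^ k)
    (ha1 : padicValRat p (a 1) < 0)
    (haj : ∀ j, 2 ≤ j → j ≤ n → padicValRat p (a 1) ≤ padicValRat p (a j)) :
    ∃ β : ℚ_[p], β ^ n = ∑ j ∈ Finset.Icc 1 n, ((a j : ℚ) : ℚ_[p]) * β ^ (n - j) ∧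
      ‖β‖ = ‖((a 1 : ℚ) : ℚ_[p])‖ ∧ 1 < ‖β‖ :=
  padic_root_exists_general p n hn a ha1 haj
end

section
/- Let p be a prime and β ∈ ℚ_p with |β|_p > 1. Let z ∈ ℤ_p lie in the subring ℤ[1/p][β^{−1}] of ℚ_p (the smallest subring of ℚ_p containing ℤ[1/p] and β^{−1}). If the beta-expansion of z is purely periodic with some period ℓ ≥ 1, i.e. T^ℓ(z) = z, then z lies in ℤ[1/p][β], the smallest subring of ℚ_p containing ℤ[1/p] and β. -/
/-- Let `β ∈ ℚ_p` with `|β|_p > 1` and let `T` be the beta-transformation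
`T(z) = ⌊βz⌋_p` on `ℤ_p` (characterized by: for `‖z‖ ≤ 1` we have `‖T z‖ ≤ 1` and
`βz = T z + d` for some `d ∈ ℤ[1/p] ∩ [0,1)`).  If `z ∈ ℤ_p` lies in the smallest subring of
`ℚ_p` containing `ℤ[1/p]` and `β⁻¹`, and the beta-expansion of `z` is purely periodic with
period `ℓ ≥ 1` (i.e. `T^[ℓ] z = z`), then `z` lies in the smallest subring of `ℚ_p` containing
`ℤ[1/p]` and `β`. -/
theorem padic_purely_periodic_mem (p : ℕ) [Fact p.Prime] (β : ℚ_[p]) (hβ : 1 < ‖β‖)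
    (T : ℚ_[p] → ℚ_[p])
    (hT : ∀ z : ℚ_[p], ‖z‖ ≤ 1 → ‖T z‖ ≤ 1 ∧
      ∃ d : ℚ, 0 ≤ d ∧ d < 1 ∧ (∃ m : ℤ, ∃ k : ℕ, d = (m : ℚ) / (p : ℚ) ^ k) ∧
        β * z = T z + ((d : ℚ) : ℚ_[p]))
    (z : ℚ_[p]) (hz : ‖z‖ ≤ 1)
    (hzmem : z ∈ Subring.closure {(p : ℚ_[p])⁻¹, β⁻¹})
    (ℓ : ℕ) (hℓ : 1 ≤ ℓ) (hper : T^[ℓ] z = z) :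
    z ∈ Subring.closure {(p : ℚ_[p])⁻¹, β} := by
  have hβ0 : β ≠ 0 := by
    intro h
    rw [h, norm_zero] at hβ
    linarith
  set R := Subring.closure {(p : ℚ_[p])⁻¹, β} with hR
  have hpR : (p : ℚ_[p])⁻¹ ∈ R := Subring.subset_closure (Set.mem_insert _ _)
  have hβR : β ∈ R := Subring.subset_closure (Set.mem_insert_of_mem _ rfl)
  -- the digits d lie in R
  have hdR : ∀ d : ℚ, (∃ m : ℤ, ∃ k : ℕ, d = (m : ℚ) / (p : ℚ) ^ k) →
      ((d : ℚ) : ℚ_[p]) ∈ R := by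
    rintro d ⟨m, k, rfl⟩
    push_cast
    have h1 : ((m : ℚ_[p]) / (p : ℚ_[p]) ^ k) = (m : ℚ_[p]) * ((p : ℚ_[p])⁻¹) ^ k := by
      rw [div_eq_mul_inv, inv_pow]
    rw [h1]
    exact mul_mem (intCast_mem R m) (pow_mem hpR k)
  -- iterates stay in the unit ball
  have hnorm : ∀ n, ‖T^[n] z‖ ≤ 1 := by
    intro n
    induction n with
    | zero => simpa using hz
    | succ n ih =>
      rw [Function.iterate_succ_apply']
      exact (hT _ ih).1
  -- β^n z - T^[n] z ∈ R
  have hdiff : ∀ n, β ^ n * z - T^[n] z ∈ R := by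
    intro n
    induction n with
    | zero => simpa using Subring.zero_mem R
    | succ n ih =>
      obtain ⟨d, _, _, hd, hEq⟩ := (hT _ (hnorm n)).2
      have key : β ^ (n + 1) * z - T^[n + 1] z
          = β * (β ^ n * z - T^[n] z) + ((d : ℚ) : ℚ_[p]) := by
        rw [Function.iterate_succ_apply']
        linear_combination hEq
      rw [key]
      exact add_mem (mul_mem hβR ih) (hdR d hd)
  have hc : β ^ ℓ * z - z ∈ R := by
    have := hdiff ℓ
    rwa [hper] at this
  -- lifting lemma
  have hlift : ∀ {a : ℚ_[p]} {N K : ℕ}, N ≤ K → β ^ N * a ∈ R → β ^ K * a ∈ R := by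
    intro a N K hNK h
    have : β ^ K * a = β ^ (K - N) * (β ^ N * a) := by
      rw [← mul_assoc, ← pow_add, Nat.sub_add_cancel hNK]
    rw [this]
    exact mul_mem (pow_mem hβR _) h
  -- from hzmem: some β^N z ∈ R
  have hS : ∃ N : ℕ, β ^ N * z ∈ R := by
    let S : Subring ℚ_[p] :=
      { carrier := {x | ∃ N : ℕ, β ^ N * x ∈ R}
        zero_mem' := ⟨0, by simpa using Subring.zero_mem R⟩
        one_mem' := ⟨0, by simpa using Subring.one_mem R⟩
        add_mem' := by
          rintro a b ⟨N, hNa⟩ ⟨M, hMb⟩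
          exact ⟨max N M, by
            rw [mul_add]
            exact add_mem (hlift (le_max_left N M) hNa) (hlift (le_max_right N M) hMb)⟩
        mul_mem' := by
          rintro a b ⟨N, hNa⟩ ⟨M, hMb⟩
          refine ⟨N + M, ?_⟩
          have : β ^ (N + M) * (a * b) = (β ^ N * a) * (β ^ M * b) := by ring
          rw [this]
          exact mul_mem hNa hMb
        neg_mem' := by
          rintro a ⟨N, hNa⟩
          exact ⟨N, by rw [mul_neg]; exact neg_mem hNa⟩ }
    have hsub : Subring.closure {(p : ℚ_[p])⁻¹, β⁻¹} ≤ S := by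
      apply Subring.closure_le.mpr
      rintro x (rfl | rfl)
      · exact ⟨0, by simpa using hpR⟩
      · refine ⟨1, ?_⟩
        rw [pow_one, mul_inv_cancel₀ hβ0]
        exact Subring.one_mem R
    exact hsub hzmem
  obtain ⟨N, hNz⟩ := hS
  -- β^(ℓ*M) z - z ∈ R for all M
  have hM : ∀ M : ℕ, β ^ (ℓ * M) * z - z ∈ R := by
    intro M
    induction M with
    | zero => simpa using Subring.zero_mem R
    | succ M ih =>
      have key : β ^ (ℓ * (M + 1)) * z - z
          = β ^ ℓ * (β ^ (ℓ * M) * z - z) + (β ^ ℓ * z - z) := by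
        rw [Nat.mul_succ]
        ring
      rw [key]
      exact add_mem (mul_mem (pow_mem hβR ℓ) ih) hc
  have hNle : N ≤ ℓ * N := Nat.le_mul_of_pos_left N hℓ
  have h1 : β ^ (ℓ * N) * z ∈ R := hlift hNle hNz
  have h2 := sub_mem h1 (hM N)
  simpa using h2
end

section
/- Let p be a prime and β ∈ ℚ_p with |β|_p > 1. Let S be an infinite set of positive integers with 1 ∈ S, and suppose that for every k ∈ S the beta-expansion of k (viewed as an element of ℤ_p) is eventually periodic. Then β is algebraic over ℚ, and its minimal polynomial over ℚ, normalized to be monic and written F(X) = X^n − a_1X^{n−1} − ⋯ − a_n, has all coefficients a_j ∈ ℤ[1/p] and satisfies: v_p(a_1) < 0, v_p(a_j) ≥ v_p(a_1) for all 1 ≤ j ≤ n, and every root of F in ℂ has archimedean absolute value at most 1. (By the paper's characterization of Pisot–Chabauty and Salem–Chabauty numbers, these conditions say exactly that β is a Pisot–Chabauty or Salem–Chabauty number.) -/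
/-
Iterating `β z = T z + d(z)` along the orbit `z_t = T^t k` gives
`β^L k = z_L + D_L(β)` with the digit polynomial `D_L = ∑_{t<L} d_t X^(L-1-t)`, so a period
`z_(j+m) = z_j` makes `β` a root of `Q_k = k (X^(j+m) - X^j) - (D_(j+m) - D_j)`.
For `k = 1` this polynomial is monic, so `β` is integral and its minimal polynomial `F` is a monic
factor of `Q_1`. By Gauss's lemma for a nonarchimedean absolute value, the coefficients of `F` are
bounded by those of `Q_1`: by `1` at every prime `l ≠ p` (the digits lie in `ℤ[1/p]`), whence
`F ∈ ℤ[1/p][X]`, and by `|β|_p` at `p` (as `d(z) = β z - T z`). Comparing the dominant terms of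
`F(β) = 0` then forces `|a_1|_p = |β|_p`. Finally, a complex root `w` of `F` with `|w| > 1` is a
root of every `Q_k`, and comparing `k |w^(j+m) - w^j|` with the geometric bound on `|D_L(w)|` gives
`k (|w| - 1)^2 ≤ |w| + 1`, which fails for large `k ∈ S`.
-/

open Polynomial Finset Rat.AbsoluteValue

namespace Polynomial

variable {R : Type*} [Ring R] {v : AbsoluteValue R ℝ}

lemma Monic.one_le_gaussNorm [Nontrivial R] {F : R[X]} (hF : F.Monic) :
    1 ≤ F.gaussNorm v 1 := by
  simpa [hF.coeff_natDegree] using F.le_gaussNorm v zero_le_one F.natDegree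

lemma gaussNorm_le_of_forall_coeff_le {Q : R[X]} {B : ℝ} (h : ∀ i, v (Q.coeff i) ≤ B) :
    Q.gaussNorm v 1 ≤ B := by
  obtain ⟨i, hi⟩ := Q.exists_eq_gaussNorm v 1
  simpa [hi] using h i

lemma Monic.gaussNorm_le_of_dvd [Nontrivial R] (hna : IsNonarchimedean v) {F Q : R[X]}
    (hF : F.Monic) (hQ : Q.Monic) (hdvd : F ∣ Q) : F.gaussNorm v 1 ≤ Q.gaussNorm v 1 := by
  obtain ⟨H, rfl⟩ := hdvd
  rw [gaussNorm_mul hna one_pos]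
  exact le_mul_of_one_le_right (gaussNorm_nonneg _ _ zero_le_one)
    (hF.of_mul_monic_left hQ).one_le_gaussNorm

lemma Monic.eq_X_pow_sub_sum_Icc {F : R[X]} (hF : F.Monic) :
    F = X ^ F.natDegree - ∑ j ∈ Icc 1 F.natDegree,
      C (-F.coeff (F.natDegree - j)) * X ^ (F.natDegree - j) := by
  set n := F.natDegree
  have hreflect : ∑ j ∈ Icc 1 n, C (-F.coeff (n - j)) * X ^ (n - j) =
      -∑ i ∈ range n, C (F.coeff i) * X ^ i := by
    rw [← sum_neg_distrib]
    refine sum_nbij' (n - ·) (n - ·) ?_ ?_ ?_ ?_ ?_ <;> intro i hi <;>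
      simp only [mem_Icc, mem_range] at hi ⊢ <;>
      first | omega | simp
  conv_lhs => rw [hF.as_sum]
  rw [hreflect, sub_neg_eq_add]

lemma Monic.norm_coeff_natDegree_sub_one_eq {K : Type*} [NormedField K]
    [IsUltrametricDist K] {F : K[X]} (hF : F.Monic) {x : K} (hx : F.IsRoot x) (h1 : 1 < ‖x‖)
    (hc : ∀ i, ‖F.coeff i‖ ≤ ‖x‖) : ‖F.coeff (F.natDegree - 1)‖ = ‖x‖ := by
  set n := F.natDegree
  have hsum : x ^ n = -∑ i ∈ range n, F.coeff i * x ^ i := by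
    rw [IsRoot, hF.as_sum] at hx
    simpa [eval_finsetSum, eq_neg_iff_add_eq_zero] using hx
  have hn : 0 < n := Nat.pos_of_ne_zero fun h0 => by simp [h0] at hsum
  refine (hc _).antisymm (not_lt.1 fun hlt => ?_)
  obtain ⟨i, hi, hle⟩ := IsUltrametricDist.exists_norm_finsetSum_le_of_nonempty
    (nonempty_range_iff.2 hn.ne') fun i => F.coeff i * x ^ i
  have hterm : ‖F.coeff i‖ * ‖x‖ ^ i < ‖x‖ ^ n := by
    rcases Nat.lt_or_ge i (n - 1) with hi' | hi'
    · calc ‖F.coeff i‖ * ‖x‖ ^ i ≤ ‖x‖ ^ (i + 1) := by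
            rw [pow_succ']; gcongr; exact hc i
        _ < ‖x‖ ^ n := pow_lt_pow_right₀ h1 (by omega)
    · obtain rfl : i = n - 1 := by simp at hi; omega
      calc ‖F.coeff (n - 1)‖ * ‖x‖ ^ (n - 1) < ‖x‖ * ‖x‖ ^ (n - 1) := by gcongr
        _ = ‖x‖ ^ n := by rw [← pow_succ']; congr 1; omega
  have := congrArg norm hsum
  rw [norm_neg, norm_pow] at this
  rw [norm_mul, norm_pow] at hle
  linarith

end Polynomial

lemma IsNonarchimedean.apply_sub_le_of_le {R : Type*} [Ring R] {v : AbsoluteValue R ℝ}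
    (hna : IsNonarchimedean v) {a b : R} {B : ℝ} (ha : v a ≤ B) (hb : v b ≤ B) :
    v (a - b) ≤ B := by
  rw [sub_eq_add_neg]
  exact (hna a (-b)).trans (max_le ha (by rwa [AbsoluteValue.map_neg]))

namespace Rat.AbsoluteValue

lemma isNonarchimedean_padic (p : ℕ) [Fact p.Prime] : IsNonarchimedean (padic p) := fun a b => by
  simp only [padic_eq_padicNorm]
  exact_mod_cast padicNorm.nonarchimedean

lemma padic_intCast_div_pow_le_one {p l : ℕ} [Fact p.Prime] [Fact l.Prime] (hlp : l ≠ p)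
    (m : ℤ) (k : ℕ) : padic l (m / p ^ k) ≤ 1 := by
  rw [padic_eq_padicNorm, padicNorm.div, IsAbsoluteValue.abv_pow (padicNorm l),
    padicNorm.padicNorm_of_prime_of_ne hlp, one_pow, div_one]
  exact_mod_cast padicNorm.of_int m

lemma one_lt_padic_of_dvd_den {p : ℕ} [Fact p.Prime] {q : ℚ} (h : p ∣ q.den) : 1 < padic p q := by
  have hnum : padicNorm p q.num = 1 := (padicNorm.int_eq_one_iff _).2 fun hnum =>
    (Fact.out : p.Prime).one_lt.ne' (Nat.Coprime.eq_one_of_dvd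
      (Nat.Coprime.coprime_dvd_left (Int.natAbs_dvd_natAbs.2 hnum) q.reduced) h)
  have hden : padicNorm p q.den < 1 := (padicNorm.nat_lt_one_iff _).2 h
  have hden0 : 0 < padicNorm p q.den :=
    (padicNorm.nonneg _).lt_of_ne (padicNorm.nonzero (by simp)).symm
  have : padicNorm p q * padicNorm p q.den = 1 := by
    rw [← padicNorm.mul, Rat.mul_den_eq_num, hnum]
  rw [padic_eq_padicNorm]
  exact_mod_cast (show 1 < padicNorm p q by nlinarith [padicNorm.nonneg (p := p) q])

lemma exists_eq_intCast_div_pow_of_padic_le_one {p : ℕ} {q : ℚ}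
    (h : ∀ (l : ℕ) [Fact l.Prime], l ≠ p → padic l q ≤ 1) : ∃ m : ℤ, ∃ k : ℕ, q = m / p ^ k := by
  have hden : q.den = p ^ q.den.primeFactorsList.length := by
    refine Nat.eq_prime_pow_of_unique_prime_dvd q.den_nz fun {l} hl hdvd => by_contra fun hlp => ?_
    have := Fact.mk hl
    exact (h l hlp).not_gt (one_lt_padic_of_dvd_den hdvd)
  refine ⟨q.num, q.den.primeFactorsList.length, ?_⟩
  nth_rw 1 [← Rat.num_div_den q, hden]
  push_cast
  rfl

lemma padicValRat_neg_of_one_lt_padic {p : ℕ} [Fact p.Prime] {q : ℚ} (hq : 1 < padic p q) :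
    padicValRat p q < 0 := by
  have hq' : 1 < padicNorm p q := by rw [padic_eq_padicNorm] at hq; exact_mod_cast hq
  have hq0 : q ≠ 0 := by rintro rfl; norm_num at hq'
  rw [padicNorm.eq_zpow_of_nonzero hq0] at hq'
  have hp : (1 : ℚ) < p := by exact_mod_cast (Fact.out : p.Prime).one_lt
  simpa using (one_lt_zpow_iff_right₀ hp).1 hq'

lemma padicValRat_le_of_padic_le {p : ℕ} [Fact p.Prime] {q r : ℚ} (hq : 1 < padic p q)
    (h : padic p r ≤ padic p q) : padicValRat p q ≤ padicValRat p r := by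
  have hneg := padicValRat_neg_of_one_lt_padic hq
  rcases eq_or_ne r 0 with rfl | hr
  · simpa using hneg.le
  have hq0 : q ≠ 0 := by rintro rfl; norm_num at hq
  have h' : padicNorm p r ≤ padicNorm p q := by
    simp only [padic_eq_padicNorm] at h
    exact_mod_cast h
  rw [padicNorm.eq_zpow_of_nonzero hq0, padicNorm.eq_zpow_of_nonzero hr] at h'
  have hp : (1 : ℚ) < p := by exact_mod_cast (Fact.out : p.Prime).one_lt
  simpa using (zpow_le_zpow_iff_right₀ hp).1 h'

end Rat.AbsoluteValue

section DigitPoly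

variable {R : Type*}

noncomputable def digitPoly [Semiring R] (e : ℕ → R) : ℕ → R[X]
  | 0 => 0
  | L + 1 => X * digitPoly e L + C (e L)

lemma coeff_digitPoly [Semiring R] (e : ℕ → R) (L i : ℕ) :
    (digitPoly e L).coeff i = if i < L then e (L - 1 - i) else 0 := by
  induction L generalizing i with
  | zero => simp [digitPoly]
  | succ L ih =>
    cases i with
    | zero => simp [digitPoly]
    | succ i =>
      simp only [digitPoly, coeff_add, coeff_X_mul, ih, coeff_C_succ, add_zero]
      split_ifs <;> first | rfl | omega | (congr 1; omega)

lemma aeval_digitPoly_succ [CommSemiring R] {A : Type*} [Semiring A] [Algebra R A]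
    (e : ℕ → R) (x : A) (L : ℕ) :
    aeval x (digitPoly e (L + 1)) = x * aeval x (digitPoly e L) + algebraMap R A (e L) := by
  simp [digitPoly]

lemma pow_mul_eq_add_aeval_digitPoly [CommSemiring R] {A : Type*} [Semiring A] [Algebra R A]
    {e : ℕ → R} {β : A} {z : ℕ → A} (hstep : ∀ t, β * z t = z (t + 1) + algebraMap R A (e t))
    (L : ℕ) : β ^ L * z 0 = z L + aeval β (digitPoly e L) := by
  induction L with
  | zero => simp [digitPoly]
  | succ L ih =>
    rw [pow_succ', mul_assoc, ih, mul_add, hstep, aeval_digitPoly_succ]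
    abel

lemma norm_aeval_digitPoly_le [CommSemiring R] {A : Type*} [NormedRing A] [Algebra R A]
    {e : ℕ → R} (he : ∀ t, ‖algebraMap R A (e t)‖ ≤ 1) (w : A) (L : ℕ) :
    ‖aeval w (digitPoly e L)‖ ≤ ∑ t ∈ range L, ‖w‖ ^ t := by
  induction L with
  | zero => simp [digitPoly]
  | succ L ih =>
    rw [aeval_digitPoly_succ, geom_sum_succ]
    calc _ ≤ ‖w‖ * ‖aeval w (digitPoly e L)‖ + 1 :=
          (norm_add_le _ _).trans (add_le_add (norm_mul_le _ _) (he L))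
      _ ≤ _ := by gcongr

end DigitPoly

section PeriodPoly

variable {R : Type*} [CommRing R]

noncomputable def periodPoly (e : ℕ → R) (k j m : ℕ) : R[X] :=
  (k : R[X]) * (X ^ (j + m) - X ^ j) - (digitPoly e (j + m) - digitPoly e j)

lemma aeval_periodPoly_eq_zero {A : Type*} [CommRing A] [Algebra R A] {e : ℕ → R} {β : A}
    {z : ℕ → A} (hstep : ∀ t, β * z t = z (t + 1) + algebraMap R A (e t)) {k j m : ℕ}
    (hz : z 0 = k) (hper : z (j + m) = z j) : aeval β (periodPoly e k j m) = 0 := by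
  have hjm := pow_mul_eq_add_aeval_digitPoly hstep (j + m)
  have hj := pow_mul_eq_add_aeval_digitPoly hstep j
  rw [hz] at hjm hj
  simp only [periodPoly, map_sub, map_mul, map_natCast, map_pow, aeval_X]
  linear_combination hjm - hj + hper

lemma monic_periodPoly_one [Nontrivial R] (e : ℕ → R) (j : ℕ) {m : ℕ} (hm : 0 < m) :
    (periodPoly e 1 j m).Monic := by
  have : periodPoly e 1 j m = X ^ (j + m) - (X ^ j + (digitPoly e (j + m) - digitPoly e j)) := by
    simp only [periodPoly, Nat.cast_one, one_mul]; ring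
  rw [this]
  refine monic_X_pow_sub ((degree_lt_iff_coeff_zero _ _).2 fun i hi => ?_)
  simp only [coeff_add, coeff_sub, coeff_X_pow, coeff_digitPoly]
  rw [if_neg (by omega), if_neg (by omega), if_neg (by omega)]
  simp

lemma abv_coeff_periodPoly_le [Nontrivial R] {v : AbsoluteValue R ℝ} (hna : IsNonarchimedean v)
    {e : ℕ → R} {B : ℝ} (hB : 1 ≤ B) (he : ∀ t, v (e t) ≤ B) (k j m i : ℕ) :
    v ((periodPoly e k j m).coeff i) ≤ B := by
  have hX : ∀ n, v ((X ^ n : R[X]).coeff i) ≤ B := fun n => by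
    rw [coeff_X_pow]; split_ifs <;> simp [hB, zero_le_one.trans hB]
  have hD : ∀ L, v ((digitPoly e L).coeff i) ≤ B := fun L => by
    rw [coeff_digitPoly]; split_ifs <;> simp [he, zero_le_one.trans hB]
  simp only [periodPoly, coeff_sub, coeff_natCast_mul]
  exact hna.apply_sub_le_of_le ((hna.nmul_le).trans (hna.apply_sub_le_of_le (hX _) (hX _)))
    (hna.apply_sub_le_of_le (hD _) (hD _))

lemma isIntegral_of_aeval_periodPoly_one_eq_zero {K A : Type*} [Field K] [Ring A] [Algebra K A]
    {e : ℕ → K} {j m : ℕ} (hm : 0 < m) {β : A} (hβ : aeval β (periodPoly e 1 j m) = 0) :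
    IsIntegral K β :=
  ⟨_, monic_periodPoly_one e j hm, hβ⟩

lemma abv_coeff_minpoly_le {K A : Type*} [Field K] [Ring A] [Algebra K A]
    {v : AbsoluteValue K ℝ} (hna : IsNonarchimedean v) {e : ℕ → K} {B : ℝ} (hB : 1 ≤ B)
    (he : ∀ t, v (e t) ≤ B) {j m : ℕ} (hm : 0 < m) {β : A}
    (hβ : aeval β (periodPoly e 1 j m) = 0) (i : ℕ) : v ((minpoly K β).coeff i) ≤ B :=
  calc v ((minpoly K β).coeff i) ≤ (minpoly K β).gaussNorm v 1 := by
        simpa using (minpoly K β).le_gaussNorm v zero_le_one i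
    _ ≤ (periodPoly e 1 j m).gaussNorm v 1 :=
      (minpoly.monic (isIntegral_of_aeval_periodPoly_one_eq_zero hm hβ)).gaussNorm_le_of_dvd hna
        (monic_periodPoly_one e j hm) (minpoly.dvd K β hβ)
    _ ≤ B := gaussNorm_le_of_forall_coeff_le (abv_coeff_periodPoly_le hna hB he 1 j m)

lemma natCast_mul_sq_le_of_aeval_periodPoly_eq_zero {e : ℕ → ℚ} (he : ∀ t, |e t| ≤ 1)
    {k j m : ℕ} (hm : 0 < m) {w : ℂ} (hw1 : 1 < ‖w‖) (hw : aeval w (periodPoly e k j m) = 0) :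
    (k : ℝ) * (‖w‖ - 1) ^ 2 ≤ ‖w‖ + 1 := by
  set r := ‖w‖
  have hdigits : ∀ L, ‖aeval w (digitPoly e L)‖ * (r - 1) ≤ r ^ L - 1 := fun L => by
    rw [← geom_sum_mul]
    gcongr ?_ * _
    exact norm_aeval_digitPoly_le (fun t => by simpa using (Rat.cast_le (K := ℝ)).2 (he t)) w L
  have hkey : (k : ℂ) * (w ^ (j + m) - w ^ j) =
      aeval w (digitPoly e (j + m)) - aeval w (digitPoly e j) := by
    simp only [periodPoly, map_sub, map_mul, map_natCast, map_pow, aeval_X] at hw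
    linear_combination hw
  have hlower : (k : ℝ) * (r ^ (j + m) - r ^ j) ≤
      ‖aeval w (digitPoly e (j + m))‖ + ‖aeval w (digitPoly e j)‖ := by
    calc _ ≤ ‖(k : ℂ) * (w ^ (j + m) - w ^ j)‖ := by
          rw [norm_mul, Complex.norm_natCast]
          gcongr
          simpa [r] using norm_sub_norm_le (w ^ (j + m)) (w ^ j)
       _ ≤ _ := hkey ▸ norm_sub_le _ _
  have hrm : r ≤ r ^ m := le_self_pow₀ hw1.le hm.ne'
  have hrj : 0 < r ^ j := by positivity
  have hperiod : (k : ℝ) * (r ^ m - 1) * (r - 1) ≤ r ^ m + 1 := by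
    have h1 := hdigits (j + m)
    have h2 := hdigits j
    rw [pow_add] at h1 hlower
    nlinarith
  nlinarith

lemma norm_le_one_of_forall_exists_aeval_periodPoly_eq_zero {w : ℂ}
    (h : ∀ N : ℕ, ∃ k > N, ∃ e : ℕ → ℚ, (∀ t, |e t| ≤ 1) ∧
      ∃ j m, 0 < m ∧ aeval w (periodPoly e k j m) = 0) : ‖w‖ ≤ 1 := by
  by_contra! hw1
  obtain ⟨k, hk, e, he, j, m, hm, hw⟩ := h ⌈(‖w‖ + 1) / (‖w‖ - 1) ^ 2⌉₊
  have hbound := natCast_mul_sq_le_of_aeval_periodPoly_eq_zero he hm hw1 hw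
  have hk' : (‖w‖ + 1) / (‖w‖ - 1) ^ 2 < k := (Nat.lt_of_ceil_lt hk)
  rw [div_lt_iff₀ (by nlinarith)] at hk'
  linarith

end PeriodPoly

section BetaTransformation

variable {p : ℕ} [Fact p.Prime] {β : ℚ_[p]} {T : ℚ_[p] → ℚ_[p]} {D : ℚ_[p] → ℚ}

lemma norm_iterate_le_one (hT : ∀ z : ℚ_[p], ‖z‖ ≤ 1 → ‖T z‖ ≤ 1) {x : ℚ_[p]} (hx : ‖x‖ ≤ 1)
    (t : ℕ) : ‖T^[t] x‖ ≤ 1 :=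
  Set.MapsTo.iterate (s := {z | ‖z‖ ≤ 1}) hT t hx

lemma aeval_periodPoly_digits_eq_zero (hT : ∀ z : ℚ_[p], ‖z‖ ≤ 1 → ‖T z‖ ≤ 1)
    (hD : ∀ z : ℚ_[p], ‖z‖ ≤ 1 → β * z = T z + D z) (k : ℕ) {j m : ℕ}
    (hper : T^[j + m] k = T^[j] k) :
    aeval β (periodPoly (fun t => D (T^[t] k)) k j m) = 0 := by
  refine aeval_periodPoly_eq_zero (z := fun t => T^[t] k) (fun t => ?_) rfl hper
  rw [Function.iterate_succ_apply', eq_ratCast]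
  exact hD _ (norm_iterate_le_one hT (IsUltrametricDist.norm_natCast_le_one _ k) t)

lemma norm_digit_le (hT : ∀ z : ℚ_[p], ‖z‖ ≤ 1 → ‖T z‖ ≤ 1)
    (hD : ∀ z : ℚ_[p], ‖z‖ ≤ 1 → β * z = T z + D z) (hβ : 1 ≤ ‖β‖) {z : ℚ_[p]} (hz : ‖z‖ ≤ 1) :
    ‖(D z : ℚ_[p])‖ ≤ ‖β‖ := by
  rw [show (D z : ℚ_[p]) = β * z + -T z by rw [hD z hz]; ring]
  refine (IsUltrametricDist.norm_add_le_max _ _).trans (max_le ?_ ?_)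
  · rw [norm_mul]
    exact mul_le_of_le_one_right (norm_nonneg _) hz
  · rw [norm_neg]
    exact (hT z hz).trans hβ

lemma padic_coeff_minpoly_natDegree_sub_one_eq (hβ : 1 < ‖β‖) (hint : IsIntegral ℚ β)
    (hc : ∀ i, padic p ((minpoly ℚ β).coeff i) ≤ ‖β‖) :
    padic p ((minpoly ℚ β).coeff ((minpoly ℚ β).natDegree - 1)) = ‖β‖ := by
  simpa [Padic.eq_padicNorm, natDegree_map] using
    ((minpoly.monic hint).map (algebraMap ℚ ℚ_[p])).norm_coeff_natDegree_sub_one_eq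
      (by simpa [aeval_def, IsRoot, eval_map] using minpoly.aeval ℚ β) hβ
      (by simpa [Padic.eq_padicNorm] using hc)

end BetaTransformation

theorem padic_periodic_implies_PC_or_SC_general (p : ℕ) [Fact p.Prime] (β : ℚ_[p]) (hβ : 1 < ‖β‖)
    (T : ℚ_[p] → ℚ_[p])
    (hT : ∀ z : ℚ_[p], ‖z‖ ≤ 1 → ‖T z‖ ≤ 1 ∧
      ∃ d : ℚ, 0 ≤ d ∧ d < 1 ∧ (∃ m : ℤ, ∃ k : ℕ, d = (m : ℚ) / (p : ℚ) ^ k) ∧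
        β * z = T z + ((d : ℚ) : ℚ_[p]))
    (S : Set ℕ) (hSinf : S.Infinite) (h1S : 1 ∈ S)
    (hper : ∀ k ∈ S, ∃ j m : ℕ, 1 ≤ m ∧
      T^[j + m] ((k : ℕ) : ℚ_[p]) = T^[j] ((k : ℕ) : ℚ_[p])) :
    IsAlgebraic ℚ β ∧
    ∃ n : ℕ, ∃ a : ℕ → ℚ,
      minpoly ℚ β = Polynomial.X ^ n -
        ∑ j ∈ Finset.Icc 1 n, Polynomial.C (a j) * Polynomial.X ^ (n - j) ∧
      (∀ j, 1 ≤ j → j ≤ n → ∃ m : ℤ, ∃ k : ℕ, a j = (m : ℚ) / (p : ℚ) ^ k) ∧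
      padicValRat p (a 1) < 0 ∧
      (∀ j, 1 ≤ j → j ≤ n → padicValRat p (a 1) ≤ padicValRat p (a j)) ∧
      (∀ w : ℂ, Polynomial.aeval w (minpoly ℚ β) = 0 → ‖w‖ ≤ 1) := by
  choose! hTball D hD0 hD1 hDform hDstep using hT
  have horbit (k : ℕ) := norm_iterate_le_one hTball (IsUltrametricDist.norm_natCast_le_one ℚ_[p] k)
  have hroot : ∀ k ∈ S, ∃ j m, 0 < m ∧
      aeval β (periodPoly (fun t => D (T^[t] k)) k j m) = 0 := fun k hk => by
    obtain ⟨j, m, hm, hperk⟩ := hper k hk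
    exact ⟨j, m, hm, aeval_periodPoly_digits_eq_zero hTball hDstep k hperk⟩
  obtain ⟨j, m, hm, hβroot⟩ := hroot 1 h1S
  have hint := isIntegral_of_aeval_periodPoly_one_eq_zero hm hβroot
  set F := minpoly ℚ β
  set n := F.natDegree
  have hcoeff_l (l : ℕ) [Fact l.Prime] (hlp : l ≠ p) (i : ℕ) : padic l (F.coeff i) ≤ 1 :=
    abv_coeff_minpoly_le (isNonarchimedean_padic l) le_rfl (fun t => by
      obtain ⟨m, k, h⟩ := hDform _ (horbit 1 t)
      exact h ▸ padic_intCast_div_pow_le_one hlp m k) hm hβroot i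
  have hcoeff_p (i : ℕ) : padic p (F.coeff i) ≤ ‖β‖ :=
    abv_coeff_minpoly_le (isNonarchimedean_padic p) hβ.le (fun t => by
      simpa [Padic.eq_padicNorm] using norm_digit_le hTball hDstep hβ.le (horbit 1 t)) hm hβroot i
  have hlead := padic_coeff_minpoly_natDegree_sub_one_eq hβ hint hcoeff_p
  refine ⟨hint.isAlgebraic, n, fun j => -F.coeff (n - j), (minpoly.monic hint).eq_X_pow_sub_sum_Icc,
    fun j _ _ => ?_, ?_, fun j _ _ => ?_, fun w hw => ?_⟩
  · obtain ⟨m, k, h⟩ := exists_eq_intCast_div_pow_of_padic_le_one fun l _ hlp =>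
      hcoeff_l l hlp (n - j)
    exact ⟨-m, k, by simp only [h]; push_cast; ring⟩
  · simpa using padicValRat_neg_of_one_lt_padic (hlead ▸ hβ)
  · simpa using padicValRat_le_of_padic_le (hlead ▸ hβ) ((hcoeff_p _).trans hlead.ge)
  · refine norm_le_one_of_forall_exists_aeval_periodPoly_eq_zero fun N => ?_
    obtain ⟨k, hkS, hk⟩ := hSinf.exists_gt N
    obtain ⟨j, m, hm, hβk⟩ := hroot k hkS
    exact ⟨k, hk, _, fun t => abs_le.2 ⟨by linarith [hD0 _ (horbit k t)], (hD1 _ (horbit k t)).le⟩,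
      j, m, hm, aeval_eq_zero_of_dvd_aeval_eq_zero (minpoly.dvd ℚ β hβk) hw⟩

/-- **converse of Bertrand–Schmidt analogue.** Let `β ∈ ℚ_p` with `|β|_p > 1`
and let `T(z) = ⌊βz⌋_p` be the beta-transformation.  If `S` is an infinite set of positive
integers with `1 ∈ S` such that every `k ∈ S` has an eventually periodic beta-expansion, then
`β` is algebraic over `ℚ` and its minimal polynomial, written
`X^n − a_1 X^(n−1) − ⋯ − a_n`, has all `a_j ∈ ℤ[1/p]`, `v_p(a_1) < 0`,
`v_p(a_j) ≥ v_p(a_1)` for `1 ≤ j ≤ n`, and all complex roots of archimedean absolute value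
`≤ 1` (i.e. `β` is a Pisot–Chabauty or Salem–Chabauty number). -/
theorem padic_periodic_implies_PC_or_SC (p : ℕ) [Fact p.Prime] (β : ℚ_[p]) (hβ : 1 < ‖β‖)
    (T : ℚ_[p] → ℚ_[p])
    (hT : ∀ z : ℚ_[p], ‖z‖ ≤ 1 → ‖T z‖ ≤ 1 ∧
      ∃ d : ℚ, 0 ≤ d ∧ d < 1 ∧ (∃ m : ℤ, ∃ k : ℕ, d = (m : ℚ) / (p : ℚ) ^ k) ∧
        β * z = T z + ((d : ℚ) : ℚ_[p]))
    (S : Set ℕ) (hSinf : S.Infinite) (h1S : 1 ∈ S) (hSpos : ∀ k ∈ S, 0 < k)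
    (hper : ∀ k ∈ S, ∃ j m : ℕ, 1 ≤ m ∧
      T^[j + m] ((k : ℕ) : ℚ_[p]) = T^[j] ((k : ℕ) : ℚ_[p])) :
    IsAlgebraic ℚ β ∧
    ∃ n : ℕ, ∃ a : ℕ → ℚ,
      minpoly ℚ β = Polynomial.X ^ n -
        ∑ j ∈ Finset.Icc 1 n, Polynomial.C (a j) * Polynomial.X ^ (n - j) ∧
      (∀ j, 1 ≤ j → j ≤ n → ∃ m : ℤ, ∃ k : ℕ, a j = (m : ℚ) / (p : ℚ) ^ k) ∧
      padicValRat p (a 1) < 0 ∧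
      (∀ j, 1 ≤ j → j ≤ n → padicValRat p (a 1) ≤ padicValRat p (a j)) ∧
      (∀ w : ℂ, Polynomial.aeval w (minpoly ℚ β) = 0 → ‖w‖ ≤ 1) :=
  padic_periodic_implies_PC_or_SC_general p β hβ T hT S hSinf h1S hper
end

section
/- Let p be a prime and β ∈ ℚ_p with |β|_p > 1, and suppose β is a root of an irreducible polynomial F(X) = X^n − a_1X^{n−1} − ⋯ − a_n ∈ ℚ[X] with all a_j ∈ ℤ[1/p] such that: (i) every root of F in ℂ has archimedean absolute value strictly less than 1 and |a_1|_p > 1 (so β is a Pisot–Chabauty number); (ii) |a_j|_p < |a_1|_p for all 2 ≤ j ≤ n; (iii) (−a_n, −a_{n−1}, …, −a_1) ∈ 𝒟_n^0. Then β satisfies the finiteness property (F): every z in the intersection of ℤ_p with the subring ℤ[1/p][β^{−1}] of ℚ_p (the smallest subring containing ℤ[1/p] and β^{−1}) has finite beta-expansion, i.e. T^k(z) = 0 for some k ≥ 0. -/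
/-!
Write `n = m + 1` and `ψ_j = -(β^(m-j) - a_1 β^(m-j-1) - ⋯ - a_(m-j))` for `j ≤ m`. Since
`F(β) = 0`, `β ψ_j = ψ_(j-1) - a_(n-j)` (with `ψ_(-1) = 0`), so `ℤ[1/p][β]` lies in the
`ℤ[1/p]`-span of the `ψ_j`, and on coordinates with respect to them `T` acts as
`c ↦ (c_1, …, c_m, t)`, where `t` is `∑ a_(n-j) c_j` plus the digit. Hypothesis (ii) and the root
equation give `|a_j|_p p ≤ |β|_p` for `j ≥ 2`, hence `|ψ_j|_p ≤ 1/p` for `j < m`, and the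
ultrametric inequality bounds the new coordinate `t` by `max(1, B/p)` when the old ones are bounded
by `B`. So every `n` steps the coordinates shrink by a factor `p`, until they lie in
`ℤ[1/p] ∩ ℤ_p = ℤ`. On integer coordinates the digit is forced, and `T` is exactly the shift radix
system `τ̃_r` for `r = (-a_n, …, -a_1)`, whose orbits reach `0` by (iii). Finally,
`z ∈ ℤ[1/p][β⁻¹]` gives `β^N z ∈ ℤ[1/p][β]` and `T^N z - β^N z ∈ ℤ[1/p][β]`, so `T^N z` has
coordinates in `ℤ[1/p]`.
-/

/-- The shift radix system map `τ̃_r(z_1,…,z_n) = (z_2,…,z_n, −⌊r·z⌋)`. -/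
noncomputable def srsTauTilde {n : ℕ} (r : Fin n → ℝ) (z : Fin n → ℤ) : Fin n → ℤ :=
  fun i => if h : (i : ℕ) + 1 < n then z ⟨(i : ℕ) + 1, h⟩
           else -⌊∑ j, r j * (z j : ℝ)⌋

/-- The set `𝒟_n^0 = {r ∈ ℝ^n : every τ̃_r-orbit ends up in 0}`. -/
def Dn0 (n : ℕ) : Set (Fin n → ℝ) :=
  {r | ∀ z : Fin n → ℤ, ∃ k : ℕ, (srsTauTilde r)^[k] z = 0}

open Finset

theorem exists_pow_mul_mem_closure_insert {K : Type*} [Field K] {b : K} (hb : b ≠ 0) {s : Set K}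
    {x : K} (hx : x ∈ Subring.closure (insert b⁻¹ s)) :
    ∃ N : ℕ, b ^ N * x ∈ Subring.closure (insert b s) := by
  have hb_mem : b ∈ Subring.closure (insert b s) := Subring.subset_closure (Set.mem_insert _ _)
  have raise : ∀ {y : K} {N M : ℕ}, N ≤ M → b ^ N * y ∈ Subring.closure (insert b s) →
      b ^ M * y ∈ Subring.closure (insert b s) := by
    intro y N M hNM hy
    rw [← Nat.sub_add_cancel hNM, pow_add, mul_assoc]
    exact mul_mem (pow_mem hb_mem _) hy
  induction hx using Subring.closure_induction with
  | mem y hy =>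
    rcases hy with rfl | hy
    · exact ⟨1, by simp [hb]⟩
    · exact ⟨0, by simpa using Subring.subset_closure (Set.mem_insert_of_mem _ hy)⟩
  | zero => exact ⟨0, by simp⟩
  | one => exact ⟨0, by simp⟩
  | add y z _ _ hy hz =>
    obtain ⟨N, hN⟩ := hy
    obtain ⟨M, hM⟩ := hz
    exact ⟨max N M, mul_add (b ^ max N M) y z ▸
      add_mem (raise (le_max_left N M) hN) (raise (le_max_right N M) hM)⟩
  | neg y _ hy =>
    obtain ⟨N, hN⟩ := hy
    exact ⟨N, by simpa using neg_mem hN⟩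
  | mul y z _ _ hy hz =>
    obtain ⟨N, hN⟩ := hy
    obtain ⟨M, hM⟩ := hz
    exact ⟨N + M, by simpa [pow_add, mul_mul_mul_comm] using mul_mem hN hM⟩

theorem closure_subset_of_one_mem_of_mul_mem {R : Type*} [Ring R] {s : Set R}
    {M : AddSubgroup R} (h1 : (1 : R) ∈ M) (hs : ∀ x ∈ s, ∀ y ∈ M, x * y ∈ M) :
    (Subring.closure s : Set R) ⊆ M := by
  intro x hx
  suffices ∀ y ∈ M, x * y ∈ M by simpa using this 1 h1
  induction hx using Subring.closure_induction with
  | mem x hx => exact hs x hx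
  | zero => simp [M.zero_mem]
  | one => simp
  | add x z _ _ hx hz => exact fun y hy => add_mul x z y ▸ M.add_mem (hx y hy) (hz y hy)
  | neg x _ hx => exact fun y hy => by simpa using M.neg_mem (hx y hy)
  | mul x z _ _ hx hz => exact fun y hy => mul_assoc x z y ▸ hx _ (hz y hy)

theorem snoc_tail_mem {α S : Type*} [SetLike S α] {s : S} {m : ℕ} {c : Fin (m + 1) → α}
    (hc : ∀ j, c j ∈ s) {t : α} (ht : t ∈ s) (j : Fin (m + 1)) :
    Fin.snoc (α := fun _ => α) (Fin.tail c) t j ∈ s :=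
  Fin.lastCases (by simpa using ht) (fun i => by simpa [Fin.tail] using hc i.succ) j

theorem srsTauTilde_eq_snoc {m : ℕ} (r : Fin (m + 1) → ℝ) (z : Fin (m + 1) → ℤ) :
    srsTauTilde r z = Fin.snoc (Fin.tail z) (-⌊∑ j, r j * (z j : ℝ)⌋) := by
  funext i
  refine Fin.lastCases ?_ (fun i => ?_) i
  · simp [srsTauTilde]
  · simp [srsTauTilde, Fin.tail, Fin.succ]

def intAdjoinInv (p : ℕ) : Subring ℚ := Subring.closure {(p : ℚ)⁻¹}

section IntAdjoinInv

variable {p : ℕ}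

theorem mem_intAdjoinInv_of_eq_div {q : ℚ} (h : ∃ m : ℤ, ∃ k : ℕ, q = m / p ^ k) :
    q ∈ intAdjoinInv p := by
  obtain ⟨m, k, rfl⟩ := h
  rw [div_eq_mul_inv, ← inv_pow]
  have hinv : (p : ℚ)⁻¹ ∈ intAdjoinInv p := Subring.subset_closure rfl
  exact mul_mem (intCast_mem _ m) (pow_mem hinv k)

theorem exists_mul_pow_eq_intCast (hp : p ≠ 0) {q : ℚ} (hq : q ∈ intAdjoinInv p) :
    ∃ k : ℕ, ∃ m : ℤ, q * p ^ k = m := by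
  induction hq using Subring.closure_induction with
  | mem x hx =>
    rw [Set.mem_singleton_iff.1 hx]
    exact ⟨1, 1, by simp [hp]⟩
  | zero => exact ⟨0, 0, by simp⟩
  | one => exact ⟨0, 1, by simp⟩
  | add x y _ _ hx hy =>
    obtain ⟨k, m, hm⟩ := hx
    obtain ⟨l, n, hn⟩ := hy
    exact ⟨k + l, m * p ^ l + n * p ^ k, by push_cast; rw [← hm, ← hn]; ring⟩
  | neg x _ hx =>
    obtain ⟨k, m, hm⟩ := hx
    exact ⟨k, -m, by push_cast; rw [← hm]; ring⟩
  | mul x y _ _ hx hy =>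
    obtain ⟨k, m, hm⟩ := hx
    obtain ⟨l, n, hn⟩ := hy
    exact ⟨k + l, m * n, by push_cast; rw [← hm, ← hn]; ring⟩

theorem exists_eq_intCast_of_norm_le_one [Fact p.Prime] {q : ℚ} (hq : q ∈ intAdjoinInv p)
    (h : ‖(q : ℚ_[p])‖ ≤ 1) : ∃ z : ℤ, q = z := by
  obtain ⟨k, m, hm⟩ := exists_mul_pow_eq_intCast (Fact.out : p.Prime).ne_zero hq
  have hnorm : ‖(m : ℚ_[p])‖ ≤ (p : ℝ) ^ (-(k : ℤ)) := by
    have : (m : ℚ_[p]) = (q : ℚ_[p]) * (p : ℚ_[p]) ^ k := by exact_mod_cast hm.symm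
    rw [this, norm_mul, Padic.norm_p_pow]
    exact mul_le_of_le_one_left (by positivity) h
  obtain ⟨z, rfl⟩ := (Padic.norm_int_le_pow_iff_dvd m k).1 hnorm
  refine ⟨z, ?_⟩
  rw [← mul_left_inj' (pow_ne_zero k (Nat.cast_ne_zero.2 (Fact.out : p.Prime).ne_zero)), hm]
  push_cast
  ring

theorem ratCast_mem_of_inv_mem {K : Type*} [DivisionRing K] [CharZero K] {A : Subring K}
    (hA : (p : K)⁻¹ ∈ A) {q : ℚ} (hq : q ∈ intAdjoinInv p) : (q : K) ∈ A :=
  (Subring.closure_le.2 (by simpa using hA) : intAdjoinInv p ≤ A.comap (Rat.castHom K)) hq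

theorem sum_coeff_mul_mem {m : ℕ} {a : ℕ → ℚ}
    (haR : ∀ j, 1 ≤ j → j ≤ m + 1 → a j ∈ intAdjoinInv p) {c : Fin (m + 1) → ℚ}
    (hc : ∀ j, c j ∈ intAdjoinInv p) : ∑ j : Fin (m + 1), a (m + 1 - j) * c j ∈ intAdjoinInv p :=
  sum_mem fun j _ => mul_mem (haR _ (by omega) (by omega)) (hc j)

end IntAdjoinInv

variable {p : ℕ} [Fact p.Prime]

theorem Padic.norm_mul_le_of_norm_lt {x y : ℚ_[p]} (h : ‖x‖ < ‖y‖) : ‖x‖ * p ≤ ‖y‖ := by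
  rcases eq_or_ne x 0 with rfl | hx
  · simp
  have hy : y ≠ 0 := norm_pos_iff.1 ((norm_nonneg x).trans_lt h)
  have hp : (1 : ℝ) < p := by exact_mod_cast (Fact.out : p.Prime).one_lt
  rw [Padic.norm_eq_zpow_neg_valuation hx, Padic.norm_eq_zpow_neg_valuation hy] at h ⊢
  have hv : -x.valuation < -y.valuation := (zpow_lt_zpow_iff_right₀ hp).1 h
  calc (p : ℝ) ^ (-x.valuation) * p = (p : ℝ) ^ (-x.valuation + 1) := by
        rw [zpow_add_one₀ (by positivity)]
    _ ≤ (p : ℝ) ^ (-y.valuation) := zpow_le_zpow_right₀ hp.le (by omega)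

section Horner

variable (β : ℚ_[p]) (a : ℕ → ℚ)

noncomputable def horner : ℕ → ℚ_[p]
  | 0 => 1
  | i + 1 => β * horner i - a (i + 1)

theorem horner_eq (i : ℕ) :
    horner β a i = β ^ i - ∑ t ∈ Icc 1 i, (a t : ℚ_[p]) * β ^ (i - t) := by
  induction i with
  | zero => simp [horner]
  | succ i ih =>
    have hshift : ∑ t ∈ Icc 1 i, (a t : ℚ_[p]) * β ^ (i + 1 - t)
        = β * ∑ t ∈ Icc 1 i, (a t : ℚ_[p]) * β ^ (i - t) := by
      rw [mul_sum]
      refine sum_congr rfl fun t ht => ?_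
      rw [Nat.sub_add_comm (mem_Icc.1 ht).2, pow_succ]
      ring
    rw [horner, ih, sum_Icc_succ_top (by omega), hshift, Nat.sub_self, pow_succ]
    ring

theorem aeval_eq_horner (n : ℕ) :
    Polynomial.aeval β (Polynomial.X ^ n -
      ∑ j ∈ Icc 1 n, Polynomial.C (a j) * Polynomial.X ^ (n - j)) = horner β a n := by
  simp [horner_eq]

variable {β a}

theorem norm_horner_eq_of_norm_lt (hβ : 1 ≤ ‖β‖) (hβa : ‖β‖ < ‖(a 1 : ℚ_[p])‖) {n : ℕ}
    (ha : ∀ j, 2 ≤ j → j ≤ n → ‖(a j : ℚ_[p])‖ * p ≤ ‖(a 1 : ℚ_[p])‖) :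
    ∀ i, 1 ≤ i → i ≤ n → ‖horner β a i‖ = ‖(a 1 : ℚ_[p])‖ * ‖β‖ ^ (i - 1) := by
  have hp : (1 : ℝ) < p := by exact_mod_cast (Fact.out : p.Prime).one_lt
  intro i hi
  induction i, hi using Nat.le_induction with
  | base =>
    intro _
    rw [horner, horner, mul_one, sub_eq_add_neg, IsUltrametricDist.norm_add_eq_max_of_norm_ne_norm
      (by rw [norm_neg]; exact hβa.ne), norm_neg, max_eq_right hβa.le, pow_zero, mul_one]
  | succ i hi ih =>
    intro hin
    have hlarge : ‖β * horner β a i‖ = ‖(a 1 : ℚ_[p])‖ * ‖β‖ ^ i := by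
      rw [norm_mul, ih (by omega), mul_left_comm, ← pow_succ', Nat.sub_add_cancel hi]
    have hsmall : ‖(a (i + 1) : ℚ_[p])‖ < ‖(a 1 : ℚ_[p])‖ * ‖β‖ ^ i := by
      have ha1 : 0 < ‖(a 1 : ℚ_[p])‖ := (norm_nonneg β).trans_lt hβa
      have hle := ha (i + 1) (by omega) hin
      calc ‖(a (i + 1) : ℚ_[p])‖ < ‖(a 1 : ℚ_[p])‖ := by
            nlinarith [norm_nonneg (a (i + 1) : ℚ_[p])]
        _ ≤ ‖(a 1 : ℚ_[p])‖ * ‖β‖ ^ i := le_mul_of_one_le_right ha1.le (one_le_pow₀ hβ)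
    rw [horner, sub_eq_add_neg, IsUltrametricDist.norm_add_eq_max_of_norm_ne_norm
      (by rw [norm_neg, hlarge]; exact hsmall.ne'), norm_neg, hlarge, max_eq_left hsmall.le,
      Nat.add_sub_cancel]

theorem norm_coeff_one_le (hβ : 1 ≤ ‖β‖) {n : ℕ} (hn : 1 ≤ n) (hroot : horner β a n = 0)
    (ha : ∀ j, 2 ≤ j → j ≤ n → ‖(a j : ℚ_[p])‖ * p ≤ ‖(a 1 : ℚ_[p])‖) :
    ‖(a 1 : ℚ_[p])‖ ≤ ‖β‖ := by
  by_contra! hβa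
  have h := norm_horner_eq_of_norm_lt hβ hβa ha n hn le_rfl
  rw [hroot, norm_zero] at h
  have : 0 < ‖(a 1 : ℚ_[p])‖ * ‖β‖ ^ (n - 1) :=
    mul_pos ((norm_nonneg β).trans_lt hβa) (pow_pos (zero_lt_one.trans_le hβ) _)
  exact this.ne h

theorem norm_horner_le_inv (hβ : 1 ≤ ‖β‖) {n : ℕ} (hroot : horner β a n = 0)
    (ha : ∀ j, 2 ≤ j → j ≤ n → ‖(a j : ℚ_[p])‖ * p ≤ ‖β‖) :
    ∀ i, 1 ≤ i → i ≤ n → ‖horner β a i‖ ≤ (p : ℝ)⁻¹ := by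
  intro i hi hin
  induction hin using Nat.decreasingInduction with
  | self => simp [hroot]
  | of_succ i hin ih =>
    have hrec : β * horner β a i = horner β a (i + 1) + a (i + 1) := by
      rw [horner]
      ring
    have : ‖β‖ * ‖horner β a i‖ ≤ ‖β‖ * (p : ℝ)⁻¹ := by
      rw [← norm_mul, hrec]
      refine (IsUltrametricDist.norm_add_le_max _ _).trans (max_le ?_ ?_)
      · exact (ih (by omega)).trans (le_mul_of_one_le_left (by positivity) hβ)
      · rw [le_mul_inv_iff₀ (by exact_mod_cast (Fact.out : p.Prime).pos)]
        exact ha (i + 1) (by omega) hin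
    exact le_of_mul_le_mul_left this (zero_lt_one.trans_le hβ)

end Horner

section Coordinates

variable (β : ℚ_[p]) (a : ℕ → ℚ) (m : ℕ)

/-- Coordinates with respect to `ψ_j = -horner β a (m - j)`, `j ≤ m`. -/
noncomputable def ofCoords : (Fin (m + 1) → ℚ) →+ ℚ_[p] where
  toFun c := -∑ j, (c j : ℚ_[p]) * horner β a (m - j)
  map_zero' := by simp
  map_add' c d := by
    simp only [Pi.add_apply, Rat.cast_add, add_mul, sum_add_distrib, neg_add_rev]
    ring

theorem ofCoords_apply (c : Fin (m + 1) → ℚ) :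
    ofCoords β a m c = -∑ j, (c j : ℚ_[p]) * horner β a (m - j) := rfl

theorem ofCoords_snoc (c : Fin m → ℚ) (t : ℚ) :
    ofCoords β a m (Fin.snoc c t) = -∑ i : Fin m, (c i : ℚ_[p]) * horner β a (m - i) - t := by
  simp only [ofCoords_apply, Fin.sum_univ_castSucc, Fin.snoc_castSucc, Fin.val_castSucc,
    Fin.snoc_last, Fin.val_last, Nat.sub_self, horner, mul_one]
  ring

noncomputable def coordSubgroup : AddSubgroup ℚ_[p] :=
  (AddSubgroup.pi Set.univ fun _ : Fin (m + 1) => (intAdjoinInv p).toAddSubgroup).map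
    (ofCoords β a m)

variable {β a m}

theorem mem_coordSubgroup {x : ℚ_[p]} : x ∈ coordSubgroup β a m ↔
    ∃ c : Fin (m + 1) → ℚ, (∀ j, c j ∈ intAdjoinInv p) ∧ ofCoords β a m c = x := by
  simp [coordSubgroup, AddSubgroup.mem_map, AddSubgroup.mem_pi]

theorem beta_mul_ofCoords (hroot : horner β a (m + 1) = 0) (c : Fin (m + 1) → ℚ) (t : ℚ) :
    β * ofCoords β a m c = ofCoords β a m (Fin.snoc (Fin.tail c) t)
      + ((t - ∑ j : Fin (m + 1), a (m + 1 - j) * c j : ℚ) : ℚ_[p]) := by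
  have hrec : ∀ j : Fin (m + 1),
      β * horner β a (m - j) = horner β a (m + 1 - j) + a (m + 1 - j) := by
    intro j
    rw [show m + 1 - j = m - j + 1 by omega, horner]
    ring
  have hshift : ∑ j : Fin (m + 1), (c j : ℚ_[p]) * horner β a (m + 1 - j)
      = ∑ i : Fin m, (Fin.tail c i : ℚ_[p]) * horner β a (m - i) := by
    simp [Fin.sum_univ_succ, hroot, Fin.tail]
  have hmul : β * ofCoords β a m c = -∑ j : Fin (m + 1),
      ((c j : ℚ_[p]) * horner β a (m + 1 - j) + (a (m + 1 - j) * c j : ℚ)) := by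
    rw [ofCoords_apply, mul_neg, mul_sum]
    congr 1
    refine sum_congr rfl fun j _ => ?_
    rw [mul_left_comm, hrec]
    push_cast
    ring
  rw [hmul, sum_add_distrib, hshift, ofCoords_snoc]
  push_cast
  ring

theorem closure_subset_coordSubgroup (hroot : horner β a (m + 1) = 0)
    (haR : ∀ j, 1 ≤ j → j ≤ m + 1 → a j ∈ intAdjoinInv p) :
    (Subring.closure {β, (p : ℚ_[p])⁻¹} : Set ℚ_[p]) ⊆ coordSubgroup β a m := by
  refine closure_subset_of_one_mem_of_mul_mem (mem_coordSubgroup.2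
    ⟨Fin.snoc (Fin.tail (0 : Fin (m + 1) → ℚ)) (-1),
      snoc_tail_mem (fun _ => zero_mem _) (neg_mem (one_mem _)),
      by simp [ofCoords_snoc, Fin.tail]⟩) ?_
  rintro x (rfl | rfl) y hy <;> obtain ⟨c, hc, rfl⟩ := mem_coordSubgroup.1 hy
  · refine mem_coordSubgroup.2 ⟨_, snoc_tail_mem hc (sum_coeff_mul_mem haR hc), ?_⟩
    rw [beta_mul_ofCoords hroot c, sub_self, Rat.cast_zero, add_zero]
  · have hp : (p : ℚ)⁻¹ ∈ intAdjoinInv p := Subring.subset_closure rfl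
    refine mem_coordSubgroup.2 ⟨fun j => (p : ℚ)⁻¹ * c j, fun j => mul_mem hp (hc j), ?_⟩
    simp [ofCoords_apply, mul_sum, mul_assoc]

theorem norm_last_le_max (hsmall : ∀ i, 1 ≤ i → i ≤ m → ‖horner β a i‖ ≤ (p : ℝ)⁻¹)
    (c : Fin m → ℚ) (t : ℚ) {B : ℝ} (hB : 0 ≤ B) (hc : ∀ i, ‖(c i : ℚ_[p])‖ ≤ B) :
    ‖(t : ℚ_[p])‖ ≤ max ‖ofCoords β a m (Fin.snoc c t)‖ (B * (p : ℝ)⁻¹) := by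
  have ht : (t : ℚ_[p]) = -ofCoords β a m (Fin.snoc c t)
      + -∑ i : Fin m, (c i : ℚ_[p]) * horner β a (m - i) := by
    rw [ofCoords_snoc]
    ring
  rw [ht, ← norm_neg (ofCoords β a m _)]
  refine (IsUltrametricDist.norm_add_le_max _ _).trans (max_le_max le_rfl ?_)
  rw [norm_neg]
  refine IsUltrametricDist.norm_sum_le_of_forall_le_of_nonneg (by positivity) fun i _ => ?_
  rw [norm_mul]
  exact mul_le_mul (hc i) (hsmall _ (by omega) (by omega)) (norm_nonneg _) hB

theorem norm_ofCoords_intCast_le_one (hsmall : ∀ i, 1 ≤ i → i ≤ m → ‖horner β a i‖ ≤ (p : ℝ)⁻¹)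
    (v : Fin (m + 1) → ℤ) : ‖ofCoords β a m (Int.cast ∘ v)‖ ≤ 1 := by
  rw [ofCoords_apply, norm_neg]
  refine IsUltrametricDist.norm_sum_le_of_forall_le_of_nonneg zero_le_one fun j _ => ?_
  rw [norm_mul, Function.comp_apply, Rat.cast_intCast]
  refine mul_le_one₀ (Padic.norm_int_le_one _) (norm_nonneg _) ?_
  rcases Nat.eq_zero_or_pos (m - j) with h | h
  · simp [h, horner]
  · exact (hsmall _ h (by omega)).trans
      (inv_le_one_of_one_le₀ (by exact_mod_cast (Fact.out : p.Prime).one_le))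

end Coordinates

/-- `β z = T z + d` is the Artin decomposition `β z = ⌊β z⌋_p + {β z}_p`. -/
def IsBetaTransformation (β : ℚ_[p]) (T : ℚ_[p] → ℚ_[p]) : Prop :=
  ∀ z : ℚ_[p], ‖z‖ ≤ 1 → ‖T z‖ ≤ 1 ∧ ∃ d ∈ intAdjoinInv p, 0 ≤ d ∧ d < 1 ∧ β * z = T z + d

namespace IsBetaTransformation

variable {β : ℚ_[p]} {a : ℕ → ℚ} {m : ℕ} {T : ℚ_[p] → ℚ_[p]}

theorem norm_iterate_le_one (hT : IsBetaTransformation β T) {z : ℚ_[p]} (hz : ‖z‖ ≤ 1)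
    (k : ℕ) : ‖T^[k] z‖ ≤ 1 := by
  induction k with
  | zero => exact hz
  | succ k ih =>
    rw [Function.iterate_succ_apply']
    exact (hT _ ih).1

theorem iterate_sub_pow_mul_mem (hT : IsBetaTransformation β T) {A : Subring ℚ_[p]}
    (hβ : β ∈ A) (hp : (p : ℚ_[p])⁻¹ ∈ A) {z : ℚ_[p]} (hz : ‖z‖ ≤ 1) (k : ℕ) :
    T^[k] z - β ^ k * z ∈ A := by
  induction k with
  | zero => simp
  | succ k ih =>
    obtain ⟨-, d, hd, -, -, hdigit⟩ := hT _ (hT.norm_iterate_le_one hz k)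
    rw [Function.iterate_succ_apply', eq_sub_of_add_eq hdigit.symm,
      show β * T^[k] z - d - β ^ (k + 1) * z = β * (T^[k] z - β ^ k * z) - d by ring]
    exact sub_mem (mul_mem hβ ih) (ratCast_mem_of_inv_mem hp hd)

theorem exists_apply_ofCoords_eq_snoc (hT : IsBetaTransformation β T)
    (hroot : horner β a (m + 1) = 0) {c : Fin (m + 1) → ℚ} (hball : ‖ofCoords β a m c‖ ≤ 1) :
    ∃ d ∈ intAdjoinInv p, 0 ≤ d ∧ d < 1 ∧ T (ofCoords β a m c)
      = ofCoords β a m (Fin.snoc (Fin.tail c) (∑ j : Fin (m + 1), a (m + 1 - j) * c j + d)) := by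
  obtain ⟨-, d, hd, hd0, hd1, hdigit⟩ := hT _ hball
  refine ⟨d, hd, hd0, hd1, ?_⟩
  rw [beta_mul_ofCoords hroot c, add_sub_cancel_left] at hdigit
  exact (add_right_cancel hdigit).symm

section Orbits

variable (hT : IsBetaTransformation β T) (hroot : horner β a (m + 1) = 0)
  (haR : ∀ j, 1 ≤ j → j ≤ m + 1 → a j ∈ intAdjoinInv p)
  (hsmall : ∀ i, 1 ≤ i → i ≤ m → ‖horner β a i‖ ≤ (p : ℝ)⁻¹)
include hT hroot haR hsmall

theorem semiconj_srsTauTilde :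
    Function.Semiconj (fun v : Fin (m + 1) → ℤ => ofCoords β a m (Int.cast ∘ v))
      (srsTauTilde fun i : Fin (m + 1) => ((-(a (m + 1 - i)) : ℚ) : ℝ)) T := by
  intro v
  have hball := norm_ofCoords_intCast_le_one hsmall v
  obtain ⟨d, hd, hd0, hd1, hTv⟩ := hT.exists_apply_ofCoords_eq_snoc hroot hball
  set s := ∑ j : Fin (m + 1), a (m + 1 - j) * (Int.cast ∘ v) j
  have hlast : ‖((s + d : ℚ) : ℚ_[p])‖ ≤ 1 := by
    refine (norm_last_le_max hsmall (Fin.tail (Int.cast ∘ v)) _ zero_le_one fun i => ?_).trans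
      (max_le ?_ ?_)
    · simpa [Fin.tail] using Padic.norm_int_le_one (v i.succ)
    · exact hTv ▸ (hT _ hball).1
    · simpa using inv_le_one_of_one_le₀ (by exact_mod_cast (Fact.out : p.Prime).one_le)
  obtain ⟨k, hk⟩ : ∃ k : ℤ, s + d = k := exists_eq_intCast_of_norm_le_one
    (add_mem (sum_coeff_mul_mem haR fun j => intCast_mem _ _) hd) hlast
  have hceil : -⌊∑ j : Fin (m + 1), ((-(a (m + 1 - j)) : ℚ) : ℝ) * (v j : ℝ)⌋ = k := by
    have hsum : ∑ j : Fin (m + 1), ((-(a (m + 1 - j)) : ℚ) : ℝ) * (v j : ℝ) = ((-s : ℚ) : ℝ) := by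
      simp [s, ← sum_neg_distrib]
    rw [hsum, Rat.floor_cast, Int.floor_neg, neg_neg, Int.ceil_eq_iff]
    constructor <;> linarith
  change ofCoords β a m (Int.cast ∘ srsTauTilde _ v) = T (ofCoords β a m (Int.cast ∘ v))
  rw [srsTauTilde_eq_snoc, hceil, Fin.comp_snoc, hTv, ← hk]
  rfl

theorem exists_iterate_ofCoords_intCast_eq_zero
    (hsrs : (fun i : Fin (m + 1) => ((-(a (m + 1 - i)) : ℚ) : ℝ)) ∈ Dn0 (m + 1))
    (v : Fin (m + 1) → ℤ) : ∃ k : ℕ, T^[k] (ofCoords β a m (Int.cast ∘ v)) = 0 := by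
  obtain ⟨k, hk⟩ := hsrs v
  refine ⟨k, ?_⟩
  rw [← (hT.semiconj_srsTauTilde hroot haR hsmall).iterate_right k v, hk]
  simp

theorem exists_iterate_eq_ofCoords_norm_le {B : ℝ} (hB : 1 ≤ B) {c : Fin (m + 1) → ℚ}
    (hc : ∀ j, c j ∈ intAdjoinInv p) (hball : ‖ofCoords β a m c‖ ≤ 1)
    (hcB : ∀ j, ‖(c j : ℚ_[p])‖ ≤ p * B) :
    ∃ c' : Fin (m + 1) → ℚ, (∀ j, c' j ∈ intAdjoinInv p) ∧
      T^[m + 1] (ofCoords β a m c) = ofCoords β a m c' ∧ ∀ j, ‖(c' j : ℚ_[p])‖ ≤ B := by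
  have hp : (1 : ℝ) ≤ p := by exact_mod_cast (Fact.out : p.Prime).one_le
  -- after `k` steps the last `k` coordinates are new ones, bounded by `B`
  suffices ∀ k ≤ m + 1, ∃ c' : Fin (m + 1) → ℚ, (∀ j, c' j ∈ intAdjoinInv p) ∧
      T^[k] (ofCoords β a m c) = ofCoords β a m c' ∧
      ∀ j : Fin (m + 1), ‖(c' j : ℚ_[p])‖ ≤ p * B ∧ (m + 1 ≤ j + k → ‖(c' j : ℚ_[p])‖ ≤ B) by
    obtain ⟨c', hc', hTc, hc'B⟩ := this (m + 1) le_rfl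
    exact ⟨c', hc', hTc, fun j => (hc'B j).2 (by omega)⟩
  intro k hk
  induction k with
  | zero => exact ⟨c, hc, rfl, fun j => ⟨hcB j, by omega⟩⟩
  | succ k ih =>
    obtain ⟨c', hc', hTk, hc'B⟩ := ih (by omega)
    have hball' : ‖ofCoords β a m c'‖ ≤ 1 := hTk ▸ hT.norm_iterate_le_one hball k
    obtain ⟨d, hd, -, -, hTc'⟩ := hT.exists_apply_ofCoords_eq_snoc hroot hball'
    set t := ∑ j : Fin (m + 1), a (m + 1 - j) * c' j + d
    have ht : ‖(t : ℚ_[p])‖ ≤ B := by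
      refine (norm_last_le_max hsmall (Fin.tail c') t (by positivity)
        fun i => (hc'B i.succ).1).trans (max_le ?_ ?_)
      · exact (hTc' ▸ (hT _ hball').1).trans hB
      · rw [mul_right_comm, mul_inv_cancel₀ (by positivity), one_mul]
    refine ⟨Fin.snoc (Fin.tail c') t, snoc_tail_mem hc' (add_mem (sum_coeff_mul_mem haR hc') hd),
      by rw [Function.iterate_succ_apply', hTk, hTc'], fun j => ?_⟩
    refine Fin.lastCases ?_ (fun i => ?_) j
    · rw [Fin.snoc_last]
      exact ⟨ht.trans (le_mul_of_one_le_left (by linarith) hp), fun _ => ht⟩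
    · rw [Fin.snoc_castSucc, Fin.tail]
      refine ⟨(hc'B i.succ).1, fun h => (hc'B i.succ).2 ?_⟩
      rw [Fin.val_castSucc] at h
      rw [Fin.val_succ]
      omega

theorem exists_iterate_eq_ofCoords_intCast (K : ℕ) :
    ∀ c : Fin (m + 1) → ℚ, (∀ j, c j ∈ intAdjoinInv p) → ‖ofCoords β a m c‖ ≤ 1 →
      (∀ j, ‖(c j : ℚ_[p])‖ ≤ (p : ℝ) ^ K) →
      ∃ k : ℕ, ∃ v : Fin (m + 1) → ℤ, T^[k] (ofCoords β a m c) = ofCoords β a m (Int.cast ∘ v) := by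
  induction K with
  | zero =>
    intro c hc _ hcK
    choose v hv using fun j => exists_eq_intCast_of_norm_le_one (hc j) (by simpa using hcK j)
    exact ⟨0, v, by rw [Function.iterate_zero_apply]; congr; funext j; exact hv j⟩
  | succ K ih =>
    intro c hc hball hcK
    obtain ⟨c', hc', hTc, hc'K⟩ := hT.exists_iterate_eq_ofCoords_norm_le hroot haR hsmall
      (one_le_pow₀ (by exact_mod_cast (Fact.out : p.Prime).one_le)) hc hball
      (fun j => (hcK j).trans_eq (pow_succ' _ _))
    obtain ⟨k, v, hv⟩ := ih c' hc' (hTc ▸ hT.norm_iterate_le_one hball _) hc'K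
    exact ⟨k + (m + 1), v, by rw [Function.iterate_add_apply, hTc, hv]⟩

theorem exists_iterate_ofCoords_eq_zero
    (hsrs : (fun i : Fin (m + 1) => ((-(a (m + 1 - i)) : ℚ) : ℝ)) ∈ Dn0 (m + 1))
    {c : Fin (m + 1) → ℚ} (hc : ∀ j, c j ∈ intAdjoinInv p) (hball : ‖ofCoords β a m c‖ ≤ 1) :
    ∃ k : ℕ, T^[k] (ofCoords β a m c) = 0 := by
  obtain ⟨B, hB⟩ := Finite.exists_le fun j => ‖(c j : ℚ_[p])‖
  obtain ⟨K, hK⟩ := pow_unbounded_of_one_lt B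
    (show (1 : ℝ) < p by exact_mod_cast (Fact.out : p.Prime).one_lt)
  obtain ⟨k, v, hv⟩ := hT.exists_iterate_eq_ofCoords_intCast hroot haR hsmall K c hc hball
    fun j => (hB j).trans hK.le
  obtain ⟨l, hl⟩ := hT.exists_iterate_ofCoords_intCast_eq_zero hroot haR hsmall hsrs v
  exact ⟨l + k, by rw [Function.iterate_add_apply, hv, hl]⟩

theorem exists_iterate_eq_zero (hβ : β ≠ 0)
    (hsrs : (fun i : Fin (m + 1) => ((-(a (m + 1 - i)) : ℚ) : ℝ)) ∈ Dn0 (m + 1))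
    {z : ℚ_[p]} (hz : ‖z‖ ≤ 1) (hcl : z ∈ Subring.closure {(p : ℚ_[p])⁻¹, β⁻¹}) :
    ∃ k : ℕ, T^[k] z = 0 := by
  rw [Set.pair_comm] at hcl
  obtain ⟨N, hN⟩ := exists_pow_mul_mem_closure_insert hβ hcl
  have hTN : T^[N] z ∈ Subring.closure {β, (p : ℚ_[p])⁻¹} := by
    simpa using add_mem (hT.iterate_sub_pow_mul_mem (Subring.subset_closure (by simp))
      (Subring.subset_closure (by simp)) hz N) hN
  obtain ⟨c, hc, hcz⟩ := mem_coordSubgroup.1 (closure_subset_coordSubgroup hroot haR hTN)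
  obtain ⟨k, hk⟩ := hT.exists_iterate_ofCoords_eq_zero hroot haR hsmall hsrs hc
    (hcz ▸ hT.norm_iterate_le_one hz N)
  exact ⟨k + N, by rw [Function.iterate_add_apply, ← hcz, hk]⟩

end Orbits

end IsBetaTransformation

theorem padic_finiteness_sufficient_general (p : ℕ) [Fact p.Prime] (β : ℚ_[p]) (hβ : 1 < ‖β‖)
    (n : ℕ) (hn : 1 ≤ n) (a : ℕ → ℚ) (F : Polynomial ℚ)
    (hF : F = Polynomial.X ^ n -
      ∑ j ∈ Finset.Icc 1 n, Polynomial.C (a j) * Polynomial.X ^ (n - j))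
    (hroot : Polynomial.aeval β F = 0)
    (haZ : ∀ j, 1 ≤ j → j ≤ n → ∃ m : ℤ, ∃ k : ℕ, a j = (m : ℚ) / (p : ℚ) ^ k)
    (haj : ∀ j, 2 ≤ j → j ≤ n → padicNorm p (a j) < padicNorm p (a 1))
    (hsrs : (fun i : Fin n => ((-(a (n - (i : ℕ))) : ℚ) : ℝ)) ∈ Dn0 n)
    (T : ℚ_[p] → ℚ_[p])
    (hT : ∀ z : ℚ_[p], ‖z‖ ≤ 1 → ‖T z‖ ≤ 1 ∧
      ∃ d : ℚ, 0 ≤ d ∧ d < 1 ∧ (∃ m : ℤ, ∃ k : ℕ, d = (m : ℚ) / (p : ℚ) ^ k) ∧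
        β * z = T z + ((d : ℚ) : ℚ_[p])) :
    ∀ z : ℚ_[p], ‖z‖ ≤ 1 → z ∈ Subring.closure {(p : ℚ_[p])⁻¹, β⁻¹} →
      ∃ k : ℕ, T^[k] z = 0 := by
  intro z hz hcl
  obtain ⟨m, rfl⟩ : ∃ m, n = m + 1 := ⟨n - 1, by omega⟩
  have hroot' : horner β a (m + 1) = 0 := by rwa [hF, aeval_eq_horner] at hroot
  have ha1 : ∀ j, 2 ≤ j → j ≤ m + 1 → ‖(a j : ℚ_[p])‖ * p ≤ ‖(a 1 : ℚ_[p])‖ := fun j hj hjn =>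
    Padic.norm_mul_le_of_norm_lt
      (by simpa only [Padic.eq_padicNorm, Rat.cast_lt] using haj j hj hjn)
  have haβ : ∀ j, 2 ≤ j → j ≤ m + 1 → ‖(a j : ℚ_[p])‖ * p ≤ ‖β‖ := fun j hj hjn =>
    (ha1 j hj hjn).trans (norm_coeff_one_le hβ.le (by omega) hroot' ha1)
  have hT' : IsBetaTransformation β T := fun x hx => by
    obtain ⟨hTx, d, hd0, hd1, hd, hdigit⟩ := hT x hx
    exact ⟨hTx, d, mem_intAdjoinInv_of_eq_div hd, hd0, hd1, hdigit⟩
  exact hT'.exists_iterate_eq_zero hroot'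
    (fun j hj hjn => mem_intAdjoinInv_of_eq_div (haZ j hj hjn))
    (fun i hi him => norm_horner_le_inv hβ.le hroot' haβ i hi (by omega))
    (norm_pos_iff.1 (zero_lt_one.trans hβ)) hsrs hz hcl

/-- **sufficiency in the finiteness theorem.** Let `β ∈ ℚ_p` with `|β|_p > 1`
be a root of an irreducible `F = X^n − a_1 X^(n−1) − ⋯ − a_n ∈ ℚ[X]`, all `a_j ∈ ℤ[1/p]`,
such that: (i) all complex roots of `F` have archimedean absolute value `< 1` and
`|a_1|_p > 1` (β is Pisot–Chabauty); (ii) `|a_j|_p < |a_1|_p` for `2 ≤ j ≤ n`;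
(iii) `(−a_n, …, −a_1) ∈ 𝒟_n^0`.  Then every `z ∈ ℤ_p ∩ ℤ[1/p][β⁻¹]` has finite
beta-expansion: `T^[k] z = 0` for some `k`. -/
theorem padic_finiteness_sufficient (p : ℕ) [Fact p.Prime] (β : ℚ_[p]) (hβ : 1 < ‖β‖)
    (n : ℕ) (hn : 1 ≤ n) (a : ℕ → ℚ) (F : Polynomial ℚ)
    (hF : F = Polynomial.X ^ n -
      ∑ j ∈ Finset.Icc 1 n, Polynomial.C (a j) * Polynomial.X ^ (n - j))
    (hirr : Irreducible F)
    (hroot : Polynomial.aeval β F = 0)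
    (haZ : ∀ j, 1 ≤ j → j ≤ n → ∃ m : ℤ, ∃ k : ℕ, a j = (m : ℚ) / (p : ℚ) ^ k)
    (harch : ∀ w : ℂ, Polynomial.aeval w F = 0 → ‖w‖ < 1)
    (ha1 : 1 < padicNorm p (a 1))
    (haj : ∀ j, 2 ≤ j → j ≤ n → padicNorm p (a j) < padicNorm p (a 1))
    (hsrs : (fun i : Fin n => ((-(a (n - (i : ℕ))) : ℚ) : ℝ)) ∈ Dn0 n)
    (T : ℚ_[p] → ℚ_[p])
    (hT : ∀ z : ℚ_[p], ‖z‖ ≤ 1 → ‖T z‖ ≤ 1 ∧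
      ∃ d : ℚ, 0 ≤ d ∧ d < 1 ∧ (∃ m : ℤ, ∃ k : ℕ, d = (m : ℚ) / (p : ℚ) ^ k) ∧
        β * z = T z + ((d : ℚ) : ℚ_[p])) :
    ∀ z : ℚ_[p], ‖z‖ ≤ 1 → z ∈ Subring.closure {(p : ℚ_[p])⁻¹, β⁻¹} →
      ∃ k : ℕ, T^[k] z = 0 :=
  padic_finiteness_sufficient_general p β hβ n hn a F hF hroot haZ haj hsrs T hT
end
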